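/- arXiv:1201.1272 — 3 statements merged into one kernel-verified Lean document; each statement's English description precedes it below -/
import Mathlib

section
/- Let n be a nonempty finite type. Let f : Matrix n n ℂ → ℝ be a function such that f(B) ≥ 0 for every positive semidefinite B, f(B + C) = f(B) + f(C) for all positive semidefinite B, C, and f(r • B) = r * f(B) for every real r ≥ 0 and every positive semidefinite B. Then there exists a unique positive semidefinite matrix A : Matrix n n ℂ such that for every positive semidefinite B, f(B) = ((A * B).trace).re. (Hilbert–Schmidt duality for the module of positive operators over the nonnegative reals.) -/
open Matrix ComplexOrder Complex

namespace HSAux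

variable {n : Type*} [Fintype n] [DecidableEq n]

noncomputable def outer (x : n → ℂ) : Matrix n n ℂ := Matrix.vecMulVec x (star x)

omit [DecidableEq n] in
lemma outer_posSemidef (x : n → ℂ) : (outer x).PosSemidef := by
  refine PosSemidef.of_dotProduct_mulVec_nonneg ?_ ?_
  · ext i j
    simp [outer, vecMulVec, conjTranspose_apply, mul_comm]
  · intro y
    have : star y ⬝ᵥ (outer x) *ᵥ y = star (star x ⬝ᵥ y) * (star x ⬝ᵥ y) := by
      simp only [outer, vecMulVec, mulVec, dotProduct, of_apply, star_sum, star_mul',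
        star_star, Pi.star_apply, Finset.mul_sum, Finset.sum_mul]
      rw [Finset.sum_comm]
      refine Finset.sum_congr rfl fun i _ => Finset.sum_congr rfl fun j _ => by ring
    rw [this]
    exact star_mul_self_nonneg _

omit [DecidableEq n] in
lemma trace_mul_outer (A : Matrix n n ℂ) (x : n → ℂ) :
    (A * outer x).trace = star x ⬝ᵥ (A *ᵥ x) := by
  simp only [outer, vecMulVec, trace, Matrix.mul_apply, dotProduct, mulVec, diag_apply,
    of_apply, Pi.star_apply, Finset.mul_sum]
  refine Finset.sum_congr rfl fun i _ => Finset.sum_congr rfl fun j _ => by ring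

omit [DecidableEq n] in
lemma smul_posSemidef {r : ℝ} (hr : 0 ≤ r) {B : Matrix n n ℂ} (hB : B.PosSemidef) :
    (r • B).PosSemidef := by
  refine PosSemidef.of_dotProduct_mulVec_nonneg ?_ ?_
  · ext i j
    simp [conjTranspose_apply, hB.isHermitian.apply]
  · intro y
    have : star y ⬝ᵥ (r • B) *ᵥ y = (r : ℂ) * (star y ⬝ᵥ B *ᵥ y) := by
      simp [smul_mulVec, dotProduct_smul, Complex.real_smul]
    rw [this]
    exact mul_nonneg (Complex.zero_le_real.2 hr) (hB.dotProduct_mulVec_nonneg y)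

omit [DecidableEq n] in
lemma quad_star {H : Matrix n n ℂ} (hH : H.IsHermitian) (x : n → ℂ) :
    star (star x ⬝ᵥ H *ᵥ x) = star x ⬝ᵥ H *ᵥ x := by
  simp only [dotProduct, mulVec, star_sum, star_mul', star_star, Pi.star_apply,
    Finset.mul_sum]
  rw [Finset.sum_comm]
  refine Finset.sum_congr rfl fun i _ => Finset.sum_congr rfl fun j _ => ?_
  rw [← hH.apply i j]
  simp only [star, RingInvo.toRingEquiv]
  ring

omit [DecidableEq n] in
lemma quad_im_zero {H : Matrix n n ℂ} (hH : H.IsHermitian) (x : n → ℂ) :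
    (star x ⬝ᵥ H *ᵥ x).im = 0 := by
  have h2 := congrArg Complex.im (quad_star hH x)
  simp only [star_def, conj_im] at h2
  linarith

omit [DecidableEq n] in
lemma trace_im_zero {A B : Matrix n n ℂ} (hA : A.IsHermitian) (hB : B.IsHermitian) :
    ((A * B).trace).im = 0 := by
  have h : star ((A * B).trace) = (A * B).trace := by
    rw [← Matrix.trace_conjTranspose, conjTranspose_mul, hA.eq, hB.eq, Matrix.trace_mul_comm]
  have h2 := congrArg Complex.im h
  simp only [star_def, conj_im] at h2
  linarith

lemma shift_posSemidef {H : Matrix n n ℂ} (hH : H.IsHermitian) :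
    (H + (∑ i, ∑ j, ‖H i j‖) • (1 : Matrix n n ℂ)).PosSemidef := by
  set c : ℝ := ∑ i, ∑ j, ‖H i j‖ with hc
  refine PosSemidef.of_dotProduct_mulVec_nonneg ?_ ?_
  · ext i j
    simp only [conjTranspose_apply, Matrix.add_apply, Matrix.smul_apply, one_apply, star_add, star_smul,
      smul_eq_mul]
    rw [hH.apply]
    by_cases h : j = i
    · simp [h]
    · rw [if_neg h, if_neg (fun hh => h hh.symm)]
      simp
  · intro x
    set S : ℝ := ∑ k, Complex.normSq (x k) with hS
    have hSnn : 0 ≤ S := Finset.sum_nonneg fun k _ => Complex.normSq_nonneg _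
    have hexp : star x ⬝ᵥ (H + c • 1) *ᵥ x = star x ⬝ᵥ H *ᵥ x + (c * S : ℝ) := by
      rw [add_mulVec, dotProduct_add]
      congr 1
      have h1 : (c • (1 : Matrix n n ℂ)) *ᵥ x = c • x := by
        ext k; simp [mulVec, Matrix.smul_apply, one_apply, dotProduct]
      rw [h1]
      simp only [dotProduct, Pi.smul_apply, Pi.star_apply, Complex.real_smul]
      push_cast [hS]
      rw [Finset.mul_sum]
      refine Finset.sum_congr rfl fun k _ => ?_
      rw [Complex.normSq_eq_conj_mul_self]
      push_cast
      rw [Complex.star_def]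
      ring
    have habs : ‖star x ⬝ᵥ H *ᵥ x‖ ≤ c * S := by
      calc ‖star x ⬝ᵥ H *ᵥ x‖
          ≤ ∑ k, ‖star (x k) * (H *ᵥ x) k‖ := norm_sum_le _ _
        _ ≤ ∑ k, ∑ l, ‖star (x k) * (H k l * x l)‖ := by
            refine Finset.sum_le_sum fun k _ => ?_
            rw [show star (x k) * (H *ᵥ x) k = ∑ l, star (x k) * (H k l * x l) by
              simp [mulVec, dotProduct, Finset.mul_sum]]
            exact norm_sum_le _ _
        _ ≤ ∑ k, ∑ l, ‖H k l‖ * S := by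
            refine Finset.sum_le_sum fun k _ => Finset.sum_le_sum fun l _ => ?_
            rw [norm_mul, norm_mul]
            have hk : ‖x k‖ ^ 2 ≤ S := by
              rw [Complex.sq_norm]
              exact Finset.single_le_sum (fun m _ => Complex.normSq_nonneg (x m))
                (Finset.mem_univ k)
            have hl : ‖x l‖ ^ 2 ≤ S := by
              rw [Complex.sq_norm]
              exact Finset.single_le_sum (fun m _ => Complex.normSq_nonneg (x m))
                (Finset.mem_univ l)
            have hxkl : ‖x k‖ * ‖x l‖ ≤ S := by
              nlinarith [norm_nonneg (x k), norm_nonneg (x l),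
                sq_nonneg (‖x k‖ - ‖x l‖)]
            calc ‖star (x k)‖ * (‖H k l‖ * ‖x l‖)
                = ‖H k l‖ * (‖x k‖ * ‖x l‖) := by
                  simp only [Complex.star_def, Complex.norm_conj]; ring
              _ ≤ ‖H k l‖ * S :=
                  mul_le_mul_of_nonneg_left hxkl (norm_nonneg _)
        _ = c * S := by simp only [hc, Finset.sum_mul]
    rw [hexp, Complex.nonneg_iff]
    constructor
    · simp only [Complex.add_re, Complex.ofReal_re]
      have := Complex.abs_re_le_norm (star x ⬝ᵥ H *ᵥ x)
      have h3 := abs_le.1 this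
      linarith [h3.1]
    · simp [quad_im_zero hH x]

omit [DecidableEq n] in
lemma smul_isHermitian {r : ℝ} {B : Matrix n n ℂ} (hB : B.IsHermitian) :
    (r • B).IsHermitian := by
  ext i j
  simp [conjTranspose_apply, hB.apply]

lemma eq_zero_of_quad_eq_zero {D : Matrix n n ℂ} (h : ∀ x, star x ⬝ᵥ D *ᵥ x = 0) : D = 0 := by
  have hdiag : ∀ i, D i i = 0 := by
    intro i
    have := h (Pi.single i 1)
    simpa [dotProduct, mulVec, Pi.single_apply, apply_ite, Finset.sum_ite_eq] using this
  have hcross : ∀ i j, i ≠ j → ∀ c : ℂ, c * D i j + (starRingEnd ℂ) c * D j i = 0 := by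
    intro i j hij c
    have := h (Pi.single i 1 + Pi.single j c)
    simp only [star_add, ← Pi.single_star, star_one, mulVec_add, mulVec_single, dotProduct_add,
      add_dotProduct, mul_one, single_dotProduct, one_mul, Pi.smul_apply, op_smul_eq_mul,
        col_apply] at this
    rw [hdiag i, hdiag j] at this
    simp only [mul_zero, zero_add, add_zero, zero_mul, Complex.star_def] at this
    linear_combination this
  ext i j
  by_cases hij : i = j
  · subst hij; simp [hdiag i]
  · have h1 : D i j + D j i = 0 := by
      have := hcross i j hij 1
      simpa using this
    have h2 : D i j - D j i = 0 := by
      have hI := hcross i j hij Complex.I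
      rw [Complex.conj_I] at hI
      have h3 : Complex.I * (D i j - D j i) = 0 := by linear_combination hI
      rcases mul_eq_zero.mp h3 with h4 | h4
      · exact absurd h4 Complex.I_ne_zero
      · exact h4
    have h5 : (2:ℂ) * D i j = 0 := by linear_combination h1 + h2
    simp only [Matrix.zero_apply]
    rcases mul_eq_zero.mp h5 with h6 | h6
    · exact absurd h6 two_ne_zero
    · exact h6

end HSAux

theorem hilbert_schmidt_posSemidef {n : Type*} [Fintype n] [Nonempty n]
    (f : Matrix n n ℂ → ℝ)
    (hnn : ∀ B : Matrix n n ℂ, B.PosSemidef → 0 ≤ f B)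
    (hadd : ∀ B C : Matrix n n ℂ, B.PosSemidef → C.PosSemidef → f (B + C) = f B + f C)
    (hsmul : ∀ (r : ℝ), 0 ≤ r → ∀ B : Matrix n n ℂ, B.PosSemidef → f (r • B) = r * f B) :
    ∃! A : Matrix n n ℂ, A.PosSemidef ∧
      ∀ B : Matrix n n ℂ, B.PosSemidef → f B = ((A * B).trace).re := by
  classical
  set cc : Matrix n n ℂ → ℝ := fun H => ∑ i, ∑ j, ‖H i j‖ with hcc
  have hf0 : f 0 = 0 := by
    have := hsmul 0 le_rfl 0 Matrix.PosSemidef.zero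
    simpa using this
  set F : Matrix n n ℂ → ℝ := fun H => f (H + cc H • 1) - cc H * f 1 with hF
  have hccnn : ∀ H, 0 ≤ cc H := fun H =>
    Finset.sum_nonneg fun i _ => Finset.sum_nonneg fun j _ => norm_nonneg _
  have hone : (1 : Matrix n n ℂ).PosSemidef := Matrix.PosSemidef.one
  have hfsmul1 : ∀ r : ℝ, 0 ≤ r → f (r • (1 : Matrix n n ℂ)) = r * f 1 := fun r hr =>
    hsmul r hr 1 hone
  have key : ∀ (H P Q : Matrix n n ℂ), H.IsHermitian → P.PosSemidef → Q.PosSemidef →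
      H + Q = P → F H = f P - f Q := by
    intro H P Q hH hP hQ hPQ
    have h1 : (H + cc H • 1).PosSemidef := HSAux.shift_posSemidef hH
    have e : (H + cc H • 1) + Q = P + cc H • 1 := by rw [← hPQ]; abel
    have e2 : f ((H + cc H • 1) + Q) = f (H + cc H • 1) + f Q := hadd _ _ h1 hQ
    have e3 : f (P + cc H • 1) = f P + (cc H * f 1) := by
      rw [hadd _ _ hP (HSAux.smul_posSemidef (hccnn H) hone), hfsmul1 _ (hccnn H)]
    rw [e] at e2
    simp only [hF]
    rw [e3] at e2
    linarith
  have F0 : F 0 = 0 := by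
    have := key 0 0 0 Matrix.isHermitian_zero Matrix.PosSemidef.zero Matrix.PosSemidef.zero
      (by simp)
    simpa [hf0] using this
  have Fpsd : ∀ P : Matrix n n ℂ, P.PosSemidef → F P = f P := by
    intro P hP
    have := key P P 0 hP.isHermitian hP Matrix.PosSemidef.zero (by simp)
    simpa [hf0] using this
  have Fadd : ∀ H K : Matrix n n ℂ, H.IsHermitian → K.IsHermitian →
      F (H + K) = F H + F K := by
    intro H K hH hK
    have hHp := HSAux.shift_posSemidef hH
    have hKp := HSAux.shift_posSemidef hK
    have hQ : ((cc H + cc K) • (1 : Matrix n n ℂ)).PosSemidef :=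
      HSAux.smul_posSemidef (add_nonneg (hccnn H) (hccnn K)) hone
    have e : (H + K) + (cc H + cc K) • (1 : Matrix n n ℂ)
        = (H + cc H • 1) + (K + cc K • 1) := by rw [add_smul]; abel
    have := key (H + K) _ _ (hH.add hK) (hHp.add hKp) hQ e
    rw [this, hadd _ _ hHp hKp, hfsmul1 _ (add_nonneg (hccnn H) (hccnn K))]
    simp only [hF]
    ring
  have Fsmul : ∀ (r : ℝ) (H : Matrix n n ℂ), H.IsHermitian → F (r • H) = r * F H := by
    intro r H hH
    have hHerm : (r • H).IsHermitian := HSAux.smul_isHermitian hH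
    rcases le_or_gt 0 r with hr | hr
    · have hP : (r • (H + cc H • 1)).PosSemidef :=
        HSAux.smul_posSemidef hr (HSAux.shift_posSemidef hH)
      have hQ : ((r * cc H) • (1 : Matrix n n ℂ)).PosSemidef :=
        HSAux.smul_posSemidef (mul_nonneg hr (hccnn H)) hone
      have e : (r • H) + (r * cc H) • (1 : Matrix n n ℂ) = r • (H + cc H • 1) := by
        rw [smul_add, mul_smul]
      have := key _ _ _ hHerm hP hQ e
      rw [this, hsmul r hr _ (HSAux.shift_posSemidef hH),
        hfsmul1 _ (mul_nonneg hr (hccnn H))]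
      simp only [hF]
      ring
    · have hs : (0:ℝ) ≤ -r := by linarith
      have hQ : ((-r) • (H + cc H • 1)).PosSemidef :=
        HSAux.smul_posSemidef hs (HSAux.shift_posSemidef hH)
      have hP : (((-r) * cc H) • (1 : Matrix n n ℂ)).PosSemidef :=
        HSAux.smul_posSemidef (mul_nonneg hs (hccnn H)) hone
      have e : (r • H) + (-r) • (H + cc H • 1) = ((-r) * cc H) • (1 : Matrix n n ℂ) := by
        rw [smul_add, mul_smul, ← add_assoc, ← add_smul]
        simp
      have := key _ _ _ hHerm hP hQ e
      rw [this, hsmul _ hs _ (HSAux.shift_posSemidef hH),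
        hfsmul1 _ (mul_nonneg hs (hccnn H))]
      simp only [hF]
      ring
  -- Hermitian and antihermitian parts
  set HP : Matrix n n ℂ → Matrix n n ℂ := fun M => ((1:ℝ)/2) • (M + Mᴴ) with hHP
  set KP : Matrix n n ℂ → Matrix n n ℂ := fun M => (-(Complex.I)/2) • (M - Mᴴ) with hKP
  have hHPh : ∀ M, (HP M).IsHermitian := by
    intro M
    ext i j
    simp only [hHP, conjTranspose_apply, Matrix.smul_apply, Matrix.add_apply, star_smul, star_add,
      star_star, Complex.star_def, Complex.real_smul]
    simp only [map_add, _root_.map_mul, map_div₀, _root_.map_one, map_ofNat,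
      Complex.conj_conj, Complex.conj_ofReal]
    ring
  have hKPh : ∀ M, (KP M).IsHermitian := by
    intro M
    ext i j
    simp only [hKP, conjTranspose_apply, Matrix.smul_apply, Matrix.sub_apply, star_smul, star_sub,
      star_star, Complex.star_def, smul_eq_mul]
    simp only [map_add, _root_.map_mul, map_sub, map_neg, map_div₀, _root_.map_one, map_ofNat,
      Complex.conj_conj, Complex.conj_I, Complex.conj_ofReal]
    ring
  set G : Matrix n n ℂ → ℂ := fun M => (F (HP M) : ℂ) + Complex.I * (F (KP M)) with hG
  have Gherm : ∀ M : Matrix n n ℂ, M.IsHermitian → G M = (F M : ℂ) := by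
    intro M hM
    have e1 : HP M = M := by
      simp only [hHP]
      rw [hM.eq]
      ext i j
      simp only [Matrix.smul_apply, Matrix.add_apply, Complex.real_smul]
      push_cast
      ring
    have e2 : KP M = 0 := by
      simp only [hKP]
      rw [hM.eq, sub_self, smul_zero]
    rw [hG]
    simp only [e1, e2, F0]
    push_cast
    ring
  have Gadd : ∀ M N : Matrix n n ℂ, G (M + N) = G M + G N := by
    intro M N
    have e1 : HP (M + N) = HP M + HP N := by
      simp only [hHP, conjTranspose_add, smul_add]
      abel
    have e2 : KP (M + N) = KP M + KP N := by
      simp only [hKP, conjTranspose_add, smul_sub, smul_add]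
      abel
    rw [hG]
    simp only [e1, e2, Fadd _ _ (hHPh M) (hHPh N), Fadd _ _ (hKPh M) (hKPh N)]
    push_cast
    ring
  have GsmulR : ∀ (r : ℝ) (M : Matrix n n ℂ), G (r • M) = (r : ℂ) * G M := by
    intro r M
    have e1 : HP (r • M) = r • HP M := by
      ext i j
      simp only [hHP, Matrix.smul_apply, Matrix.add_apply, conjTranspose_apply, star_smul, Complex.real_smul,
        Complex.star_def, Complex.conj_ofReal]
      simp only [_root_.map_mul, Complex.conj_ofReal, Complex.conj_conj, map_add, map_sub,
        map_neg, map_div₀, _root_.map_one, map_ofNat, Complex.conj_I]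
      ring
    have e2 : KP (r • M) = r • KP M := by
      ext i j
      simp only [hKP, Matrix.smul_apply, Matrix.sub_apply, conjTranspose_apply, star_smul, Complex.real_smul,
        Complex.star_def, Complex.conj_ofReal, smul_eq_mul]
      simp only [_root_.map_mul, Complex.conj_ofReal, Complex.conj_conj, map_add, map_sub,
        map_neg, map_div₀, _root_.map_one, map_ofNat, Complex.conj_I]
      ring
    rw [hG]
    simp only [e1, e2, Fsmul r _ (hHPh M), Fsmul r _ (hKPh M)]
    push_cast
    ring
  have GI : ∀ M : Matrix n n ℂ, G (Complex.I • M) = Complex.I * G M := by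
    intro M
    have e1 : HP (Complex.I • M) = (-1 : ℝ) • KP M := by
      ext i j
      simp only [hHP, hKP, Matrix.smul_apply, Matrix.add_apply, Matrix.sub_apply, conjTranspose_apply, star_smul,
        Complex.star_def, Complex.conj_I, Complex.real_smul, smul_eq_mul]
      simp only [_root_.map_mul, Complex.conj_I, Complex.conj_ofReal, Complex.conj_conj,
        map_add, map_sub, map_neg, map_div₀, _root_.map_one, map_ofNat]
      push_cast
      ring
    have e2 : KP (Complex.I • M) = HP M := by
      ext i j
      simp only [hHP, hKP, Matrix.smul_apply, Matrix.add_apply, Matrix.sub_apply, conjTranspose_apply, star_smul,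
        Complex.star_def, Complex.conj_I, Complex.real_smul, smul_eq_mul]
      simp only [_root_.map_mul, Complex.conj_I, Complex.conj_ofReal, Complex.conj_conj,
        map_add, map_sub, map_neg, map_div₀, _root_.map_one, map_ofNat]
      push_cast
      linear_combination (-(M i j) / 2 - (starRingEnd ℂ) (M j i) / 2) * Complex.I_sq
    rw [hG]
    simp only [e1, e2, Fsmul (-1 : ℝ) _ (hKPh M)]
    push_cast
    linear_combination (-((F (KP M) : ℝ) : ℂ)) * Complex.I_sq
  have Gsmul : ∀ (z : ℂ) (M : Matrix n n ℂ), G (z • M) = z * G M := by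
    intro z M
    have e : z • M = (z.re : ℝ) • M + Complex.I • ((z.im : ℝ) • M) := by
      ext i j
      simp only [Matrix.smul_apply, Matrix.add_apply, Complex.real_smul, smul_eq_mul]
      conv_lhs => rw [← Complex.re_add_im z]
      ring
    rw [e, Gadd, GsmulR, GI, GsmulR]
    conv_rhs => rw [← Complex.re_add_im z]
    ring
  set Glin : Matrix n n ℂ →ₗ[ℂ] ℂ :=
    { toFun := G, map_add' := Gadd, map_smul' := fun z M => Gsmul z M } with hGlin
  set A : Matrix n n ℂ := Matrix.of (fun i j => G (Matrix.single j i 1)) with hA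
  have Gtrace : ∀ M : Matrix n n ℂ, G M = (A * M).trace := by
    intro M
    have hGG : G M = Glin M := rfl
    rw [hGG]
    conv_lhs => rw [matrix_eq_sum_single M]
    rw [map_sum]
    have hterm : ∀ i j, Glin (single i j (M i j)) = M i j * A j i := by
      intro i j
      have : single i j (M i j) = (M i j) • single i j 1 := by
        rw [smul_single, smul_eq_mul, mul_one]
      rw [this, Glin.map_smul]
      simp only [smul_eq_mul]
      rw [hA]
      simp only [of_apply]
      rfl
    simp only [map_sum, hterm]
    simp only [Matrix.trace, Matrix.diag, Matrix.mul_apply]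
    rw [Finset.sum_comm]
    refine Finset.sum_congr rfl fun i _ => Finset.sum_congr rfl fun j _ => by ring
  have Gconj : ∀ M : Matrix n n ℂ, G (Mᴴ) = (starRingEnd ℂ) (G M) := by
    intro M
    have e1 : HP (Mᴴ) = HP M := by
      simp only [hHP, conjTranspose_conjTranspose]
      rw [add_comm]
    have e2 : KP (Mᴴ) = (-1 : ℝ) • KP M := by
      ext i j
      simp only [hKP, Matrix.smul_apply, Matrix.sub_apply, conjTranspose_apply, conjTranspose_conjTranspose,
        Complex.real_smul, smul_eq_mul]
      push_cast
      ring
    rw [hG]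
    simp only [e1, e2, Fsmul (-1 : ℝ) _ (hKPh M)]
    rw [map_add, _root_.map_mul, Complex.conj_I, Complex.conj_ofReal, Complex.conj_ofReal]
    push_cast
    ring
  have Aherm : A.IsHermitian := by
    ext i j
    have hstd : (Matrix.single i j (1:ℂ))ᴴ = Matrix.single j i 1 := by
      ext k l
      simp only [conjTranspose_apply, Matrix.single, of_apply]
      by_cases h1 : j = k <;> by_cases h2 : i = l <;> simp [h1, h2, and_comm]
    have : (starRingEnd ℂ) (A j i) = A i j := by
      rw [hA]
      simp only [of_apply]
      rw [← Gconj, hstd]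
    rw [conjTranspose_apply, Complex.star_def, this]
  have hMain : ∀ B : Matrix n n ℂ, B.PosSemidef → f B = ((A * B).trace).re := by
    intro B hB
    rw [← Gtrace B, Gherm B hB.isHermitian, Fpsd B hB]
    simp
  have APsd : A.PosSemidef := by
    refine PosSemidef.of_dotProduct_mulVec_nonneg Aherm fun x => ?_
    rw [← HSAux.trace_mul_outer A x, ← Gtrace, Gherm _ (HSAux.outer_posSemidef x).isHermitian,
      Fpsd _ (HSAux.outer_posSemidef x)]
    exact Complex.zero_le_real.2 (hnn _ (HSAux.outer_posSemidef x))
  refine ⟨A, ⟨APsd, hMain⟩, ?_⟩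
  rintro A' ⟨hA', hA'eq⟩
  have hquad : ∀ x : n → ℂ, star x ⬝ᵥ (A' - A) *ᵥ x = 0 := by
    intro x
    have hO := HSAux.outer_posSemidef x
    have h1 : (A' * HSAux.outer x).trace = (A * HSAux.outer x).trace := by
      apply Complex.ext
      · have e1 := hA'eq _ hO
        have e2 := hMain _ hO
        rw [← e1, ← e2]
      · rw [HSAux.trace_im_zero hA'.isHermitian hO.isHermitian,
          HSAux.trace_im_zero Aherm hO.isHermitian]
    have : star x ⬝ᵥ (A' - A) *ᵥ x = star x ⬝ᵥ A' *ᵥ x - star x ⬝ᵥ A *ᵥ x := by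
      rw [Matrix.sub_mulVec, dotProduct_sub]
    rw [this, ← HSAux.trace_mul_outer A' x, ← HSAux.trace_mul_outer A x, h1, sub_self]
  have := HSAux.eq_zero_of_quad_eq_zero hquad
  exact sub_eq_zero.mp this
end

section
/- Let n be a nonempty finite type. Let h : Matrix n n ℂ → ℝ be a function such that h(B) ∈ [0,1] for every density matrix B, and h is affine on density matrices: for all density matrices B₁, B₂ and every real t ∈ [0,1], h(t • B₁ + (1 − t) • B₂) = t * h(B₁) + (1 − t) * h(B₂). Then there exists a unique effect A : Matrix n n ℂ such that h(B) = ((A * B).trace).re for every density matrix B. (The effects on H are in bijection, via A ↦ trace(A·−), with the affine maps from the convex set of density matrices to [0,1].) -/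
open Matrix ComplexOrder
set_option linter.unusedSectionVars false
namespace EffectsAux
variable {n : Type*} [Fintype n] [DecidableEq n]

lemma rsmul (r : ℝ) (M : Matrix n n ℂ) : r • M = (r : ℂ) • M := by
  ext a b; simp [Complex.real_smul]

lemma psd_vecMulVec (v : n → ℂ) : (vecMulVec v (star v)).PosSemidef := by
  have : vecMulVec v (star v) = (replicateRow Unit (star v))ᴴ * (replicateRow Unit (star v)) := by
    rw [conjTranspose_replicateRow, star_star, ← vecMulVec_eq Unit]
  rw [this]
  exact posSemidef_conjTranspose_mul_self _

lemma trace_std (i j : n) (c : ℂ) : (Matrix.single i j c).trace = if i = j then c else 0 := by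
  by_cases h : i = j
  · subst h
    simp [Matrix.trace, Matrix.diag, Matrix.single, Finset.sum_ite_eq, of_apply]
  · simp only [Matrix.trace, Matrix.diag, if_neg h]
    refine Finset.sum_eq_zero fun a _ => ?_
    exact single_apply_of_ne i j c a a (fun hh => h (hh.1.trans hh.2.symm))

lemma trace_mul_std (M : Matrix n n ℂ) (i j : n) (c : ℂ) :
    (M * Matrix.single i j c).trace = M j i * c := by
  rw [Matrix.trace]
  rw [Finset.sum_eq_single j]
  · simp
  · intro b _ hbj
    exact mul_single_apply_of_ne (c := c) i j b b hbj M
  · intro hj; exact absurd (Finset.mem_univ j) hj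

def IsDensity (B : Matrix n n ℂ) : Prop := B.PosSemidef ∧ B.trace = 1

lemma psd_smul {t : ℝ} (ht : 0 ≤ t) {B : Matrix n n ℂ} (hB : B.PosSemidef) :
    (t • B).PosSemidef := by
  rw [rsmul]
  refine posSemidef_iff_dotProduct_mulVec.mpr ⟨?_, ?_⟩
  · have h1 : Bᴴ = B := hB.1
    show ((t:ℂ) • B)ᴴ = _
    rw [conjTranspose_smul, h1]
    simp [Complex.conj_ofReal]
  · intro x
    rw [smul_mulVec, dotProduct_smul, smul_eq_mul]
    exact mul_nonneg (by exact_mod_cast Complex.zero_le_real.mpr ht) (hB.dotProduct_mulVec_nonneg x)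

def Ei (i : n) : Matrix n n ℂ := Matrix.single i i 1

noncomputable def Sm (i j : n) : Matrix n n ℂ := if i = j then Ei i else
  (1/2 : ℝ) • (Matrix.single i i 1 + Matrix.single j j 1 + Matrix.single i j 1 + Matrix.single j i 1)

noncomputable def Tm (i j : n) : Matrix n n ℂ := if i = j then Ei i else
  (1/2 : ℝ) • (Matrix.single i i 1 + Matrix.single j j 1 + Complex.I • Matrix.single i j 1 +
    (-Complex.I) • Matrix.single j i 1)

def uv (i j : n) (c : ℂ) : n → ℂ := fun k => if k = i then 1 else if k = j then c else 0

lemma Ei_density (i : n) : IsDensity (Ei i) := by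
  constructor
  · have : Ei i = vecMulVec (uv i i 0) (star (uv i i 0)) := by
      ext a b
      by_cases ha : a = i <;> by_cases hb : b = i <;>
        simp [Ei, uv, vecMulVec_apply, Matrix.single, ha, hb, of_apply] <;> tauto
    rw [this]; exact psd_vecMulVec _
  · rw [Ei, trace_std]; simp

lemma std_conjT (i j : n) (c : ℂ) : (Matrix.single i j c)ᴴ = Matrix.single j i (star c) := by
  ext a b
  simp only [conjTranspose_apply, Matrix.single, of_apply]
  rw [apply_ite star, star_zero]
  congr 1
  simp only [eq_iff_iff, and_comm]

lemma psd_core {i j : n} (hij : i ≠ j) (c : ℂ) (hc : star c * c = 1) :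
    (Matrix.single i i (1:ℂ) + Matrix.single j j (1:ℂ) + c • Matrix.single i j (1:ℂ)
      + (star c) • Matrix.single j i (1:ℂ)).PosSemidef := by
  refine posSemidef_iff_dotProduct_mulVec.mpr ⟨?_, ?_⟩
  · show _ᴴ = _
    simp only [conjTranspose_add, conjTranspose_smul, std_conjT, star_one, star_star]
    abel
  · intro x
    simp only [add_mulVec, smul_mulVec, single_mulVec, one_mul,
      dotProduct_add, dotProduct_smul]
    have hup : ∀ (k : n) (v : ℂ), star x ⬝ᵥ Function.update (0 : n → ℂ) k v = star (x k) * v := by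
      intro k v
      rw [dotProduct]
      rw [Finset.sum_eq_single k]
      · simp
      · intro b _ hbk; simp [Function.update_of_ne hbk]
      · intro hk; exact absurd (Finset.mem_univ k) hk
    rw [hup, hup, hup, hup]
    have key : star (x i) * x i + star (x j) * x j + c • (star (x i) * x j)
        + star c • (star (x j) * x i) = star (x i + c * x j) * (x i + c * x j) := by
      simp only [smul_eq_mul, star_add, star_mul']
      linear_combination (-(star (x j) * x j)) * hc
    rw [key]
    exact star_mul_self_nonneg _


lemma Sm_density (i j : n) : IsDensity (Sm i j) := by
  by_cases hij : i = j
  · rw [Sm, if_pos hij]; exact Ei_density i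
  constructor
  · have hrw : Sm i j = (1/2 : ℝ) • (Matrix.single i i 1 + Matrix.single j j 1
        + (1:ℂ) • Matrix.single i j 1 + (star (1:ℂ)) • Matrix.single j i 1) := by
      rw [Sm, if_neg hij]
      congr 1
      simp
    rw [hrw]
    exact psd_smul (by norm_num) (psd_core hij 1 (by simp))
  · rw [Sm, if_neg hij, rsmul, trace_smul]
    simp only [trace_add, trace_std, if_pos rfl, if_neg hij, if_neg (Ne.symm hij)]
    norm_num

lemma Tm_density (i j : n) : IsDensity (Tm i j) := by
  by_cases hij : i = j
  · rw [Tm, if_pos hij]; exact Ei_density i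
  constructor
  · have hrw : Tm i j = (1/2 : ℝ) • (Matrix.single i i 1 + Matrix.single j j 1
        + Complex.I • Matrix.single i j 1 + (star Complex.I) • Matrix.single j i 1) := by
      rw [Tm, if_neg hij]
      congr 1
      simp [Complex.star_def, Complex.conj_I]
    rw [hrw]
    exact psd_smul (by norm_num) (psd_core hij Complex.I (by simp [Complex.star_def, Complex.conj_I]))
  · rw [Tm, if_neg hij, rsmul, trace_smul]
    simp only [trace_add, trace_smul, trace_std, if_pos rfl, if_neg hij, if_neg (Ne.symm hij)]
    norm_num

lemma Sm_symm (i j : n) : Sm i j = Sm j i := by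
  by_cases hij : i = j
  · subst hij; rfl
  · rw [Sm, Sm, if_neg hij, if_neg (Ne.symm hij)]
    congr 1
    abel

lemma Tm_base {i j : n} (hij : i ≠ j) : Tm i j + Tm j i = Ei i + Ei j := by
  rw [Tm, Tm, Ei, Ei, if_neg hij, if_neg (Ne.symm hij)]
  simp only [rsmul]
  push_cast
  module


lemma density_conv {B₁ B₂ : Matrix n n ℂ} (h₁ : IsDensity B₁) (h₂ : IsDensity B₂)
    {t : ℝ} (ht0 : 0 ≤ t) (ht1 : t ≤ 1) : IsDensity (t • B₁ + (1 - t) • B₂) := by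
  refine ⟨(psd_smul ht0 h₁.1).add (psd_smul (by linarith) h₂.1), ?_⟩
  rw [trace_add, rsmul, rsmul, trace_smul, trace_smul, h₁.2, h₂.2]
  simp [smul_eq_mul]

lemma conv_finset (F : Matrix n n ℂ → ℝ)
    (Faff : ∀ B₁ B₂ : Matrix n n ℂ, IsDensity B₁ → IsDensity B₂ → ∀ t : ℝ, 0 ≤ t → t ≤ 1 →
      F (t • B₁ + (1 - t) • B₂) = t * F B₁ + (1 - t) * F B₂)
    {ι : Type*} (s : Finset ι) :
    ∀ (w : ι → ℝ) (ρ : ι → Matrix n n ℂ), (∀ i ∈ s, 0 ≤ w i) → (∀ i ∈ s, IsDensity (ρ i)) →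
    (∑ i ∈ s, w i) = 1 →
    IsDensity (∑ i ∈ s, w i • ρ i) ∧ F (∑ i ∈ s, w i • ρ i) = ∑ i ∈ s, w i * F (ρ i) := by
  induction s using Finset.cons_induction with
  | empty => intro w ρ _ _ hsum; simp at hsum
  | cons a s ha ih =>
    intro w ρ hw hρ hsum
    rw [Finset.sum_cons] at hsum
    have hwa0 : 0 ≤ w a := hw a (Finset.mem_cons_self a s)
    have hwnn : ∀ i ∈ s, 0 ≤ w i := fun i hi => hw i (Finset.mem_cons_of_mem hi)
    by_cases hc : ∑ i ∈ s, w i = 0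
    · have hz : ∀ i ∈ s, w i = 0 :=
        (Finset.sum_eq_zero_iff_of_nonneg hwnn).mp hc
      have hwa : w a = 1 := by rw [hc] at hsum; linarith
      have h0 : ∑ i ∈ s, w i • ρ i = 0 := Finset.sum_eq_zero fun i hi => by
        rw [hz i hi, zero_smul]
      rw [Finset.sum_cons, Finset.sum_cons, h0, add_zero, hwa, one_smul, one_mul,
        Finset.sum_eq_zero fun i hi => by rw [hz i hi, zero_mul], add_zero]
      exact ⟨hρ a (Finset.mem_cons_self a s), rfl⟩
    · have hcpos : 0 < ∑ i ∈ s, w i :=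
        lt_of_le_of_ne (Finset.sum_nonneg hwnn) (Ne.symm hc)
      set c := ∑ i ∈ s, w i with hcdef
      have hwa1 : w a ≤ 1 := by linarith
      have hca : 1 - w a = c := by linarith
      obtain ⟨ihd, ihv⟩ := ih (fun i => w i / c) ρ
        (fun i hi => div_nonneg (hwnn i hi) hcpos.le)
        (fun i hi => hρ i (Finset.mem_cons_of_mem hi))
        (by rw [← Finset.sum_div, ← hcdef, div_self hc])
      have key : ∑ i ∈ Finset.cons a s ha, w i • ρ i
          = w a • ρ a + (1 - w a) • ∑ i ∈ s, (w i / c) • ρ i := by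
        rw [Finset.sum_cons, hca, Finset.smul_sum]
        congr 1
        refine Finset.sum_congr rfl fun i hi => ?_
        rw [smul_smul]
        congr 1
        field_simp
      constructor
      · rw [key]; exact density_conv (hρ a (Finset.mem_cons_self a s)) ihd hwa0 hwa1
      · rw [key, Faff _ _ (hρ a (Finset.mem_cons_self a s)) ihd _ hwa0 hwa1, ihv,
          Finset.sum_cons, hca, Finset.mul_sum]
        congr 1
        refine Finset.sum_congr rfl fun i hi => ?_
        field_simp

lemma affine_zero (F : Matrix n n ℂ → ℝ)
    (Faff : ∀ B₁ B₂ : Matrix n n ℂ, IsDensity B₁ → IsDensity B₂ → ∀ t : ℝ, 0 ≤ t → t ≤ 1 →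
      F (t • B₁ + (1 - t) • B₂) = t * F B₁ + (1 - t) * F B₂)
    {ι : Type*} [DecidableEq ι] (s : Finset ι) (c : ι → ℝ) (ρ : ι → Matrix n n ℂ)
    (hρ : ∀ i ∈ s, IsDensity (ρ i)) (hF0 : ∀ i ∈ s, F (ρ i) = 0)
    (hsum : ∑ i ∈ s, c i = 1) {B : Matrix n n ℂ} (hB : IsDensity B)
    (hrep : B = ∑ i ∈ s, c i • ρ i) : F B = 0 := by
  classical
  set sp := s.filter (fun i => 0 < c i) with hsp
  set sn := s.filter (fun i => ¬ 0 < c i) with hsn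
  have hsplit : ∑ i ∈ sp, c i + ∑ i ∈ sn, c i = 1 := by
    rw [hsp, hsn, Finset.sum_filter_add_sum_filter_not, hsum]
  set ν : ℝ := ∑ i ∈ sn, -c i with hν
  set π : ℝ := ∑ i ∈ sp, c i with hπ
  have hπν : π = 1 + ν := by
    rw [hπ, hν, Finset.sum_neg_distrib]; linarith
  have hν0 : 0 ≤ ν := Finset.sum_nonneg fun i hi => by
    have := (Finset.mem_filter.mp hi).2; linarith [not_lt.mp this]
  have hπpos : 0 < π := by linarith
  have hπne : π ≠ 0 := ne_of_gt hπpos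
  have hspmem : ∀ i ∈ sp, IsDensity (ρ i) := fun i hi => hρ i (Finset.mem_filter.mp hi).1
  have hsnmem : ∀ i ∈ sn, IsDensity (ρ i) := fun i hi => hρ i (Finset.mem_filter.mp hi).1
  obtain ⟨hPd, hPv⟩ := conv_finset F Faff sp (fun i => c i / π) ρ
    (fun i hi => div_nonneg (le_of_lt (Finset.mem_filter.mp hi).2) hπpos.le)
    hspmem (by rw [← Finset.sum_div, ← hπ, div_self hπne])
  have hPv0 : F (∑ i ∈ sp, (c i / π) • ρ i) = 0 := by
    rw [hPv]; exact Finset.sum_eq_zero fun i hi => by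
      rw [hF0 i (Finset.mem_filter.mp hi).1, mul_zero]
  have hmat : B + ∑ i ∈ sn, (-c i) • ρ i = ∑ i ∈ sp, c i • ρ i := by
    rw [hrep, ← Finset.sum_filter_add_sum_filter_not s (fun i => 0 < c i) (fun i => c i • ρ i)]
    simp only [neg_smul, Finset.sum_neg_distrib, ← hsp, ← hsn]
    abel
  by_cases hνz : ν = 0
  · have hz : ∀ i ∈ sn, -c i = 0 := (Finset.sum_eq_zero_iff_of_nonneg fun i hi => by
      have := (Finset.mem_filter.mp hi).2; linarith [not_lt.mp this]).mp hνz
    have h0 : ∑ i ∈ sn, (-c i) • ρ i = 0 := Finset.sum_eq_zero fun i hi => by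
      rw [hz i hi, zero_smul]
    have hπ1 : π = 1 := by rw [hπν, hνz, add_zero]
    have hBrep : B = ∑ i ∈ sp, (c i / π) • ρ i := by
      simp only [hπ1, div_one]
      rw [← hmat, h0, add_zero]
    rw [hBrep]; exact hPv0
  · have hνpos : 0 < ν := lt_of_le_of_ne hν0 (Ne.symm hνz)
    have hνne : ν ≠ 0 := ne_of_gt hνpos
    obtain ⟨hNd, hNv⟩ := conv_finset F Faff sn (fun i => (-c i) / ν) ρ
      (fun i hi => div_nonneg (by have := (Finset.mem_filter.mp hi).2; linarith [not_lt.mp this]) hνpos.le)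
      hsnmem (by rw [← Finset.sum_div, ← hν, div_self hνne])
    have hNv0 : F (∑ i ∈ sn, ((-c i) / ν) • ρ i) = 0 := by
      rw [hNv]; exact Finset.sum_eq_zero fun i hi => by
        rw [hF0 i (Finset.mem_filter.mp hi).1, mul_zero]
    have ht0 : (0:ℝ) ≤ 1 / π := by positivity
    have ht1 : 1 / π ≤ 1 := by
      rw [div_le_one hπpos]; linarith
    have h1ν : 1 - 1 / π = ν / π := by field_simp; linarith
    have key : (1/π) • B + (1 - 1/π) • (∑ i ∈ sn, ((-c i)/ν) • ρ i)
        = ∑ i ∈ sp, (c i / π) • ρ i := by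
      rw [h1ν]
      have e1 : (ν/π) • (∑ i ∈ sn, ((-c i)/ν) • ρ i) = ∑ i ∈ sn, ((1:ℝ)/π) • ((-c i) • ρ i) := by
        rw [Finset.smul_sum]
        refine Finset.sum_congr rfl fun i hi => ?_
        rw [smul_smul, smul_smul]
        congr 1
        field_simp
      have e2 : ∑ i ∈ sp, (c i / π) • ρ i = ∑ i ∈ sp, ((1:ℝ)/π) • (c i • ρ i) := by
        refine Finset.sum_congr rfl fun i hi => ?_
        rw [smul_smul]
        congr 1
        field_simp
      rw [e1, e2, ← Finset.smul_sum, ← Finset.smul_sum, ← smul_add, hmat]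
    have := Faff B _ hB hNd (1/π) ht0 ht1
    rw [key, hPv0, hNv0, mul_zero, add_zero] at this
    have hπinv : (1:ℝ)/π ≠ 0 := by positivity
    have := this.symm
    field_simp at this
    rw [this, mul_zero]

lemma Tm_trade (h : Matrix n n ℂ → ℝ)
    (haff : ∀ B₁ B₂ : Matrix n n ℂ, IsDensity B₁ → IsDensity B₂ → ∀ t : ℝ, 0 ≤ t → t ≤ 1 →
      h (t • B₁ + (1 - t) • B₂) = t * h B₁ + (1 - t) * h B₂)
    {i j : n} (hij : i ≠ j) : h (Tm i j) + h (Tm j i) = h (Ei i) + h (Ei j) := by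
  have e : (1/2 : ℝ) • Tm i j + (1 - (1/2:ℝ)) • Tm j i
      = (1/2 : ℝ) • Ei i + (1 - (1/2:ℝ)) • Ei j := by
    have h2 : (1 : ℝ) - 1/2 = 1/2 := by norm_num
    rw [h2, ← smul_add, ← smul_add, Tm_base hij]
  have h1 := haff _ _ (Tm_density i j) (Tm_density j i) (1/2) (by norm_num) (by norm_num)
  have h2 := haff _ _ (Ei_density i) (Ei_density j) (1/2) (by norm_num) (by norm_num)
  rw [e] at h1
  linarith [h1, h2]

noncomputable def Amat (h : Matrix n n ℂ → ℝ) : Matrix n n ℂ := Matrix.of fun i j =>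
  if i = j then (h (Ei i) : ℂ)
  else ((h (Sm i j) - (h (Ei i) + h (Ei j))/2 : ℝ) : ℂ)
    + ((h (Tm i j) - (h (Ei i) + h (Ei j))/2 : ℝ) : ℂ) * Complex.I

lemma Amat_diag (h : Matrix n n ℂ → ℝ) (i : n) : Amat h i i = ((h (Ei i) : ℝ) : ℂ) := by
  simp [Amat]

lemma Amat_off (h : Matrix n n ℂ → ℝ) {i j : n} (hij : i ≠ j) :
    Amat h i j = ((h (Sm i j) - (h (Ei i) + h (Ei j))/2 : ℝ) : ℂ)
      + ((h (Tm i j) - (h (Ei i) + h (Ei j))/2 : ℝ) : ℂ) * Complex.I := by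
  simp [Amat, hij]

lemma gEi (h : Matrix n n ℂ → ℝ) (k : n) : ((Amat h * Ei k).trace).re = h (Ei k) := by
  rw [Ei, trace_mul_std, mul_one, Amat_diag]
  simp [Ei]

lemma gSm (h : Matrix n n ℂ → ℝ) {i j : n} (hij : i ≠ j) :
    ((Amat h * Sm i j).trace).re = h (Sm i j) := by
  have hS : Amat h * Sm i j = Amat h * ((1/2:ℝ) • (Matrix.single i i 1 + Matrix.single j j 1
      + Matrix.single i j 1 + Matrix.single j i 1)) := by rw [Sm, if_neg hij]
  rw [hS, rsmul, Matrix.mul_smul, trace_smul, Matrix.mul_add, Matrix.mul_add,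
    Matrix.mul_add, trace_add, trace_add, trace_add, trace_mul_std, trace_mul_std,
    trace_mul_std, trace_mul_std, mul_one, mul_one, mul_one, mul_one,
    Amat_diag, Amat_diag, Amat_off h hij, Amat_off h (Ne.symm hij), Sm_symm j i]
  simp only [smul_eq_mul, Complex.mul_re, Complex.ofReal_re, Complex.ofReal_im,
    Complex.add_re, Complex.add_im, Complex.mul_im, Complex.I_re, Complex.I_im]
  ring

lemma gTm (h : Matrix n n ℂ → ℝ)
    (haff : ∀ B₁ B₂ : Matrix n n ℂ, IsDensity B₁ → IsDensity B₂ → ∀ t : ℝ, 0 ≤ t → t ≤ 1 →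
      h (t • B₁ + (1 - t) • B₂) = t * h B₁ + (1 - t) * h B₂)
    {i j : n} (hij : i ≠ j) :
    ((Amat h * Tm i j).trace).re = h (Tm i j) := by
  have hT : Amat h * Tm i j = Amat h * ((1/2:ℝ) • (Matrix.single i i 1 + Matrix.single j j 1
      + Complex.I • Matrix.single i j 1 + (-Complex.I) • Matrix.single j i 1)) := by
    rw [Tm, if_neg hij]
  rw [hT, rsmul, Matrix.mul_smul, trace_smul, Matrix.mul_add, Matrix.mul_add,
    Matrix.mul_add, Matrix.mul_smul, Matrix.mul_smul, trace_add, trace_add, trace_add,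
    trace_smul, trace_smul, trace_mul_std, trace_mul_std, trace_mul_std, trace_mul_std,
    mul_one, mul_one, mul_one, mul_one,
    Amat_diag, Amat_diag, Amat_off h hij, Amat_off h (Ne.symm hij), Sm_symm j i]
  have htr := Tm_trade h haff hij
  simp only [smul_eq_mul, Complex.mul_re, Complex.ofReal_re, Complex.ofReal_im,
    Complex.add_re, Complex.add_im, Complex.mul_im, Complex.I_re, Complex.I_im,
    Complex.neg_re, Complex.neg_im]
  nlinarith [htr]

lemma Amat_herm (h : Matrix n n ℂ → ℝ)
    (haff : ∀ B₁ B₂ : Matrix n n ℂ, IsDensity B₁ → IsDensity B₂ → ∀ t : ℝ, 0 ≤ t → t ≤ 1 →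
      h (t • B₁ + (1 - t) • B₂) = t * h B₁ + (1 - t) * h B₂) :
    (Amat h).IsHermitian := by
  apply Matrix.IsHermitian.ext
  intro i j
  by_cases hij : i = j
  · subst hij
    rw [Amat_diag]
    simp [Complex.conj_ofReal]
  · have htr := Tm_trade h haff hij
    rw [Amat_off h hij, Amat_off h (Ne.symm hij), Sm_symm j i]
    rw [show h (Tm j i) = h (Ei i) + h (Ei j) - h (Tm i j) by linarith]
    apply Complex.ext <;>
      simp [Complex.add_re, Complex.add_im, Complex.mul_re, Complex.mul_im] <;> ring

lemma dot_eq_trace (M : Matrix n n ℂ) (x : n → ℂ) :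
    star x ⬝ᵥ M *ᵥ x = (M * vecMulVec x (star x)).trace := by
  simp only [Matrix.trace, Matrix.diag, Matrix.mul_apply, vecMulVec_apply, dotProduct,
    Matrix.mulVec, Pi.star_apply, Finset.mul_sum]
  refine Finset.sum_congr rfl fun a _ => Finset.sum_congr rfl fun b _ => by ring

lemma trace_vmv (x : n → ℂ) :
    (vecMulVec x (star x)).trace = ((∑ a, Complex.normSq (x a) : ℝ) : ℂ) := by
  simp only [Matrix.trace, Matrix.diag, vecMulVec_apply, Pi.star_apply]
  push_cast
  refine Finset.sum_congr rfl fun a _ => ?_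
  rw [Complex.star_def, Complex.mul_conj]

lemma herm_quad {M : Matrix n n ℂ} (hM : M.IsHermitian) (x : n → ℂ) :
    star (star x ⬝ᵥ M *ᵥ x) = star x ⬝ᵥ M *ᵥ x := by
  simp only [dotProduct, Matrix.mulVec, Pi.star_apply, Finset.mul_sum, star_sum, star_mul']
  rw [Finset.sum_comm]
  refine Finset.sum_congr rfl fun a _ => Finset.sum_congr rfl fun b _ => ?_
  rw [star_star, hM.apply a b]
  ring

lemma decomp {B : Matrix n n ℂ} (hH : B.IsHermitian) :
    (∑ k, ((B k k).re : ℝ) • Ei k)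
    + ((∑ p : n × n, (if p.1 = p.2 then 0 else (B p.1 p.2).re) • Sm p.1 p.2)
    + ((∑ p : n × n, (if p.1 = p.2 then 0 else (B p.1 p.2).im) • Tm p.1 p.2)
    + ((∑ p : n × n, (if p.1 = p.2 then 0 else -((B p.1 p.2).re + (B p.1 p.2).im)/2) • Ei p.1)
    + (∑ p : n × n, (if p.1 = p.2 then 0 else -((B p.1 p.2).re + (B p.1 p.2).im)/2) • Ei p.2)))) = B := by
  rw [← Finset.sum_add_distrib, ← Finset.sum_add_distrib, ← Finset.sum_add_distrib]
  have point : ∀ p : n × n,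
      (if p.1 = p.2 then 0 else (B p.1 p.2).re) • Sm p.1 p.2
      + ((if p.1 = p.2 then 0 else (B p.1 p.2).im) • Tm p.1 p.2
      + ((if p.1 = p.2 then 0 else -((B p.1 p.2).re + (B p.1 p.2).im)/2) • Ei p.1
      + (if p.1 = p.2 then 0 else -((B p.1 p.2).re + (B p.1 p.2).im)/2) • Ei p.2))
      = (if p.1 = p.2 then 0 else
          (B p.1 p.2 / 2) • Matrix.single p.1 p.2 (1:ℂ)
          + (B p.2 p.1 / 2) • Matrix.single p.2 p.1 (1:ℂ)) := by
    rintro ⟨i, j⟩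
    by_cases hij : i = j
    · simp [hij]
    · simp only [if_neg hij]
      set x := (B i j).re with hx
      set y := (B i j).im with hy
      have hBij : B i j = (x : ℂ) + (y : ℂ) * Complex.I := (Complex.re_add_im _).symm
      have hBji : B j i = (x : ℂ) - (y : ℂ) * Complex.I := by
        have h1 : B j i = star (B i j) := by rw [← hH.apply i j, star_star]
        rw [h1, hBij]
        simp [Complex.star_def, map_add, Complex.conj_ofReal, Complex.conj_I]
        ring
      rw [Sm, Tm, Ei, Ei, if_neg hij, if_neg hij, hBij, hBji]
      simp only [rsmul]
      push_cast
      module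
  rw [Finset.sum_congr rfl fun p _ => point p]
  -- swap trick
  have swap_eq : ∑ p : n × n, (if p.1 = p.2 then 0 else
        (B p.1 p.2 / 2) • Matrix.single p.1 p.2 (1:ℂ)
        + (B p.2 p.1 / 2) • Matrix.single p.2 p.1 (1:ℂ))
      = ∑ p : n × n, (if p.1 = p.2 then (0:Matrix n n ℂ) else B p.1 p.2 • Matrix.single p.1 p.2 (1:ℂ)) := by
    have e1 : ∑ p : n × n, (if p.1 = p.2 then (0:Matrix n n ℂ) else
        (B p.2 p.1 / 2) • Matrix.single p.2 p.1 (1:ℂ))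
        = ∑ p : n × n, (if p.1 = p.2 then (0:Matrix n n ℂ) else
        (B p.1 p.2 / 2) • Matrix.single p.1 p.2 (1:ℂ)) := by
      apply Fintype.sum_equiv (Equiv.prodComm n n)
      rintro ⟨i, j⟩
      simp only [Equiv.prodComm_apply, Prod.swap_prod_mk]
      by_cases hij : i = j
      · simp [hij]
      · rw [if_neg hij]; simp [Ne.symm hij]
    calc ∑ p : n × n, (if p.1 = p.2 then 0 else
        (B p.1 p.2 / 2) • Matrix.single p.1 p.2 (1:ℂ)
        + (B p.2 p.1 / 2) • Matrix.single p.2 p.1 (1:ℂ))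
        = ∑ p : n × n, ((if p.1 = p.2 then (0:Matrix n n ℂ) else
            (B p.1 p.2 / 2) • Matrix.single p.1 p.2 (1:ℂ))
          + (if p.1 = p.2 then (0:Matrix n n ℂ) else
            (B p.2 p.1 / 2) • Matrix.single p.2 p.1 (1:ℂ))) := by
          refine Finset.sum_congr rfl fun p _ => ?_
          by_cases hp : p.1 = p.2 <;> simp [hp]
      _ = ∑ p : n × n, (if p.1 = p.2 then (0:Matrix n n ℂ) else B p.1 p.2 • Matrix.single p.1 p.2 (1:ℂ)) := by
          rw [Finset.sum_add_distrib, e1, ← Finset.sum_add_distrib]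
          refine Finset.sum_congr rfl fun p _ => ?_
          by_cases hp : p.1 = p.2
          · simp [hp]
          · simp only [if_neg hp, ← add_smul]
            congr 1
            ring
  rw [swap_eq]
  have diag_eq : (∑ k, ((B k k).re : ℝ) • Ei k)
      = ∑ p : n × n, (if p.1 = p.2 then B p.1 p.2 • Matrix.single p.1 p.2 (1:ℂ) else 0) := by
    rw [Fintype.sum_prod_type]
    refine Finset.sum_congr rfl fun i _ => ?_
    rw [Finset.sum_ite_eq Finset.univ i (fun j => B i j • Matrix.single i j (1:ℂ))]
    rw [if_pos (Finset.mem_univ i), rsmul, Ei]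
    congr 1
    have h1 : (starRingEnd ℂ) (B i i) = B i i := hH.apply i i
    exact (Complex.conj_eq_iff_re.mp h1)
  rw [diag_eq, ← Finset.sum_add_distrib]
  have : ∀ p : n × n, ((if p.1 = p.2 then B p.1 p.2 • Matrix.single p.1 p.2 (1:ℂ) else 0)
      + if p.1 = p.2 then 0 else B p.1 p.2 • Matrix.single p.1 p.2 (1:ℂ))
      = B p.1 p.2 • Matrix.single p.1 p.2 (1:ℂ) := by
    intro p; by_cases hp : p.1 = p.2 <;> simp [hp]
  rw [Finset.sum_congr rfl fun p _ => this p]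
  conv_rhs => rw [matrix_eq_sum_single B]
  rw [← Finset.sum_product']
  refine Finset.sum_congr rfl fun p _ => ?_
  rw [smul_single, smul_eq_mul, mul_one]

abbrev SIdx (n : Type*) : Type _ := n ⊕ ((n×n) ⊕ ((n×n) ⊕ ((n×n) ⊕ (n×n))))

noncomputable def st : SIdx n → Matrix n n ℂ :=
  Sum.elim (fun k => Ei k) (Sum.elim (fun p => Sm p.1 p.2) (Sum.elim (fun p => Tm p.1 p.2)
    (Sum.elim (fun p => Ei p.1) (fun p => Ei p.2))))

noncomputable def cf (B : Matrix n n ℂ) : SIdx n → ℝ :=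
  Sum.elim (fun k => (B k k).re) (Sum.elim (fun p => if p.1 = p.2 then 0 else (B p.1 p.2).re)
    (Sum.elim (fun p => if p.1 = p.2 then 0 else (B p.1 p.2).im)
    (Sum.elim (fun p => if p.1 = p.2 then 0 else -((B p.1 p.2).re + (B p.1 p.2).im)/2)
              (fun p => if p.1 = p.2 then 0 else -((B p.1 p.2).re + (B p.1 p.2).im)/2))))

lemma st_density : ∀ i : SIdx n, IsDensity (st i) := by
  rintro (k | p | p | p | p) <;>
    simp only [st, Sum.elim_inl, Sum.elim_inr]
  · exact Ei_density k
  · exact Sm_density p.1 p.2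
  · exact Tm_density p.1 p.2
  · exact Ei_density p.1
  · exact Ei_density p.2

lemma cf_sum {B : Matrix n n ℂ} (htr : B.trace = 1) : ∑ i : SIdx n, cf B i = 1 := by
  rw [Fintype.sum_sum_type, Fintype.sum_sum_type, Fintype.sum_sum_type, Fintype.sum_sum_type]
  simp only [cf, Sum.elim_inl, Sum.elim_inr]
  have h1 : ∑ k, (B k k).re = 1 := by
    have : (B.trace).re = 1 := by rw [htr]; simp
    rw [Matrix.trace, Complex.re_sum] at this
    exact this
  rw [h1, ← Finset.sum_add_distrib, ← Finset.sum_add_distrib, ← Finset.sum_add_distrib]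
  have : ∀ p : n × n, ((if p.1 = p.2 then 0 else (B p.1 p.2).re)
      + ((if p.1 = p.2 then 0 else (B p.1 p.2).im)
      + ((if p.1 = p.2 then 0 else -((B p.1 p.2).re + (B p.1 p.2).im)/2)
      + (if p.1 = p.2 then 0 else -((B p.1 p.2).re + (B p.1 p.2).im)/2)))) = 0 := by
    intro p
    by_cases hp : p.1 = p.2 <;> simp [hp] <;> ring
  rw [Finset.sum_congr rfl fun p _ => this p]
  simp

lemma rep {B : Matrix n n ℂ} (hH : B.IsHermitian) : B = ∑ i : SIdx n, cf B i • st i := by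
  rw [Fintype.sum_sum_type, Fintype.sum_sum_type, Fintype.sum_sum_type, Fintype.sum_sum_type]
  simp only [cf, st, Sum.elim_inl, Sum.elim_inr]
  exact (decomp hH).symm

lemma reTr_Ei (M : Matrix n n ℂ) (k : n) : ((M * Ei k).trace).re = (M k k).re := by
  rw [Ei, trace_mul_std, mul_one]

lemma reTr_Sm {M : Matrix n n ℂ} (hM : M.IsHermitian) {i j : n} (hij : i ≠ j) :
    ((M * Sm i j).trace).re = ((M i i).re + (M j j).re)/2 + (M i j).re := by
  have hS : M * Sm i j = M * ((1/2:ℝ) • (Matrix.single i i 1 + Matrix.single j j 1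
      + Matrix.single i j 1 + Matrix.single j i 1)) := by rw [Sm, if_neg hij]
  rw [hS, rsmul, Matrix.mul_smul, trace_smul, Matrix.mul_add, Matrix.mul_add,
    Matrix.mul_add, trace_add, trace_add, trace_add, trace_mul_std, trace_mul_std,
    trace_mul_std, trace_mul_std, mul_one, mul_one, mul_one, mul_one]
  have hre : (M j i).re = (M i j).re := by
    rw [← hM.apply i j]; simp
  simp only [smul_eq_mul, Complex.mul_re, Complex.ofReal_re, Complex.ofReal_im,
    Complex.add_re, Complex.add_im, hre]
  ring

lemma reTr_Tm {M : Matrix n n ℂ} (hM : M.IsHermitian) {i j : n} (hij : i ≠ j) :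
    ((M * Tm i j).trace).re = ((M i i).re + (M j j).re)/2 + (M i j).im := by
  have hT : M * Tm i j = M * ((1/2:ℝ) • (Matrix.single i i 1 + Matrix.single j j 1
      + Complex.I • Matrix.single i j 1 + (-Complex.I) • Matrix.single j i 1)) := by
    rw [Tm, if_neg hij]
  rw [hT, rsmul, Matrix.mul_smul, trace_smul, Matrix.mul_add, Matrix.mul_add,
    Matrix.mul_add, Matrix.mul_smul, Matrix.mul_smul, trace_add, trace_add, trace_add,
    trace_smul, trace_smul, trace_mul_std, trace_mul_std, trace_mul_std, trace_mul_std,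
    mul_one, mul_one, mul_one, mul_one]
  have him : (M j i).im = -(M i j).im := by
    rw [← hM.apply i j]; simp
  simp only [smul_eq_mul, Complex.mul_re, Complex.ofReal_re, Complex.ofReal_im,
    Complex.add_re, Complex.add_im, Complex.mul_im, Complex.I_re, Complex.I_im,
    Complex.neg_re, Complex.neg_im, him]
  ring

lemma g_lin (M : Matrix n n ℂ) (B₁ B₂ : Matrix n n ℂ) (t : ℝ) :
    ((M * (t • B₁ + (1 - t) • B₂)).trace).re
      = t * ((M * B₁).trace).re + (1 - t) * ((M * B₂).trace).re := by
  rw [rsmul, rsmul, Matrix.mul_add, Matrix.mul_smul, Matrix.mul_smul, trace_add,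
    trace_smul, trace_smul]
  simp only [smul_eq_mul, Complex.add_re, Complex.mul_re, Complex.ofReal_re, Complex.ofReal_im]
  ring

lemma h_eq_g (h : Matrix n n ℂ → ℝ)
    (haff : ∀ B₁ B₂ : Matrix n n ℂ, IsDensity B₁ → IsDensity B₂ → ∀ t : ℝ, 0 ≤ t → t ≤ 1 →
      h (t • B₁ + (1 - t) • B₂) = t * h B₁ + (1 - t) * h B₂)
    {B : Matrix n n ℂ} (hB : IsDensity B) : h B = ((Amat h * B).trace).re := by
  classical
  set F : Matrix n n ℂ → ℝ := fun X => h X - ((Amat h * X).trace).re with hF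
  have Faff : ∀ B₁ B₂ : Matrix n n ℂ, IsDensity B₁ → IsDensity B₂ → ∀ t : ℝ, 0 ≤ t → t ≤ 1 →
      F (t • B₁ + (1 - t) • B₂) = t * F B₁ + (1 - t) * F B₂ := by
    intro B₁ B₂ h₁ h₂ t ht0 ht1
    simp only [hF]
    rw [haff B₁ B₂ h₁ h₂ t ht0 ht1, g_lin]
    ring
  have hF0 : ∀ i : SIdx n, F (st i) = 0 := by
    rintro (k | p | p | p | p) <;> simp only [st, Sum.elim_inl, Sum.elim_inr, hF]
    · rw [gEi]; ring
    · by_cases hp : p.1 = p.2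
      · rw [Sm, if_pos hp, gEi]; ring
      · rw [gSm h hp]; ring
    · by_cases hp : p.1 = p.2
      · rw [Tm, if_pos hp, gEi]; ring
      · rw [gTm h haff hp]; ring
    · rw [gEi]; ring
    · rw [gEi]; ring
  have := affine_zero F Faff Finset.univ (cf B) st (fun i _ => st_density i)
    (fun i _ => hF0 i) (cf_sum hB.2) hB (rep hB.1.1)
  simp only [hF] at this
  linarith [this]

end EffectsAux

open EffectsAux in
theorem effects_are_affine_maps_on_densities {n : Type*} [Fintype n] [DecidableEq n] [Nonempty n]
    (h : Matrix n n ℂ → ℝ)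
    (hrange : ∀ B : Matrix n n ℂ, B.PosSemidef → B.trace = 1 → 0 ≤ h B ∧ h B ≤ 1)
    (haff : ∀ B₁ B₂ : Matrix n n ℂ, B₁.PosSemidef → B₁.trace = 1 →
      B₂.PosSemidef → B₂.trace = 1 → ∀ t : ℝ, 0 ≤ t → t ≤ 1 →
      h (t • B₁ + (1 - t) • B₂) = t * h B₁ + (1 - t) * h B₂) :
    ∃! A : Matrix n n ℂ, A.PosSemidef ∧ (1 - A).PosSemidef ∧
      ∀ B : Matrix n n ℂ, B.PosSemidef → B.trace = 1 → h B = ((A * B).trace).re := by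
  classical
  have haff' : ∀ B₁ B₂ : Matrix n n ℂ, IsDensity B₁ → IsDensity B₂ → ∀ t : ℝ, 0 ≤ t → t ≤ 1 →
      h (t • B₁ + (1 - t) • B₂) = t * h B₁ + (1 - t) * h B₂ :=
    fun B₁ B₂ h₁ h₂ t ht0 ht1 => haff B₁ B₂ h₁.1 h₁.2 h₂.1 h₂.2 t ht0 ht1
  have hherm := Amat_herm h haff'
  have key : ∀ x : n → ℂ, x ≠ 0 → ∃ c : ℝ, 0 < c ∧ ∃ ρ : Matrix n n ℂ, IsDensity ρ ∧
      star x ⬝ᵥ (Amat h) *ᵥ x = (c:ℂ) * ((Amat h * ρ).trace) ∧ star x ⬝ᵥ x = (c:ℂ) := by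
    intro x hx
    set c : ℝ := ∑ a, Complex.normSq (x a) with hc
    have hcpos : 0 < c := by
      obtain ⟨a, ha⟩ := Function.ne_iff.mp hx
      refine Finset.sum_pos' (fun b _ => Complex.normSq_nonneg _) ⟨a, Finset.mem_univ a, ?_⟩
      exact Complex.normSq_pos.mpr ha
    refine ⟨c, hcpos, (c⁻¹ : ℝ) • vecMulVec x (star x), ⟨?_, ?_⟩, ?_, ?_⟩
    · exact psd_smul (inv_nonneg.mpr hcpos.le) (psd_vecMulVec x)
    · rw [rsmul, trace_smul, trace_vmv, smul_eq_mul, ← hc, ← Complex.ofReal_mul,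
        inv_mul_cancel₀ hcpos.ne']
      simp
    · rw [dot_eq_trace]
      have hV : vecMulVec x (star x) = (c : ℝ) • ((c⁻¹ : ℝ) • vecMulVec x (star x)) := by
        rw [smul_smul, mul_inv_cancel₀ hcpos.ne', one_smul]
      nth_rewrite 1 [hV]
      rw [rsmul, Matrix.mul_smul, trace_smul, smul_eq_mul]
    · rw [dotProduct]
      rw [hc, Complex.ofReal_sum]
      refine Finset.sum_congr rfl fun a _ => ?_
      simp only [Pi.star_apply, Complex.star_def]
      rw [Complex.normSq_eq_conj_mul_self]
  have hAq : ∀ x : n → ℂ, 0 ≤ star x ⬝ᵥ (Amat h) *ᵥ x ∧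
      0 ≤ star x ⬝ᵥ (1 - Amat h) *ᵥ x := by
    intro x
    have hsub : star x ⬝ᵥ (1 - Amat h) *ᵥ x = star x ⬝ᵥ x - star x ⬝ᵥ (Amat h) *ᵥ x := by
      rw [Matrix.sub_mulVec, dotProduct_sub, Matrix.one_mulVec]
    by_cases hx : x = 0
    · subst hx
      constructor <;> simp [hsub]
    · obtain ⟨c, hcpos, ρ, hρ, hz, hxx⟩ := key x hx
      have hzim : (star x ⬝ᵥ (Amat h) *ᵥ x).im = 0 := by
        have := herm_quad hherm x
        have h2 : (starRingEnd ℂ) (star x ⬝ᵥ (Amat h) *ᵥ x) = star x ⬝ᵥ (Amat h) *ᵥ x := this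
        exact Complex.conj_eq_iff_im.mp h2
      have hre : ((Amat h * ρ).trace).re = h ρ := (h_eq_g h haff' hρ).symm
      have hzre : (star x ⬝ᵥ (Amat h) *ᵥ x).re = c * h ρ := by
        rw [hz, Complex.mul_re, Complex.ofReal_re, Complex.ofReal_im, hre]
        ring
      obtain ⟨hr0, hr1⟩ := hrange ρ hρ.1 hρ.2
      constructor
      · rw [Complex.le_def]
        refine ⟨?_, ?_⟩ <;> simp [hzre, hzim]
        positivity
      · rw [Complex.le_def, hsub, hxx]
        constructor
        · simp only [Complex.sub_re, Complex.ofReal_re, Complex.zero_re, hzre]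
          nlinarith
        · simp [hzim]
  refine ⟨Amat h, ⟨posSemidef_iff_dotProduct_mulVec.mpr ⟨hherm, fun x => (hAq x).1⟩, posSemidef_iff_dotProduct_mulVec.mpr ⟨?_, fun x => (hAq x).2⟩,
    fun B hpsd htr => h_eq_g h haff' ⟨hpsd, htr⟩⟩, ?_⟩
  · show (1 - Amat h)ᴴ = 1 - Amat h
    rw [conjTranspose_sub, conjTranspose_one, hherm.eq]
  · rintro A' ⟨hA'psd, _, hA'rep⟩
    have hA'h : A'.IsHermitian := hA'psd.1
    have hEq : ∀ B : Matrix n n ℂ, IsDensity B →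
        ((A' * B).trace).re = ((Amat h * B).trace).re := by
      intro B hB
      rw [← hA'rep B hB.1 hB.2, ← h_eq_g h haff' hB]
    have hdiag : ∀ k : n, (A' k k).re = ((Amat h) k k).re := by
      intro k
      have := hEq (Ei k) (Ei_density k)
      rwa [reTr_Ei, reTr_Ei] at this
    ext i j
    by_cases hij : i = j
    · subst hij
      have h1 : (starRingEnd ℂ) (A' i i) = A' i i := hA'h.apply i i
      have h2 : (starRingEnd ℂ) ((Amat h) i i) = (Amat h) i i := hherm.apply i i
      refine Complex.ext (hdiag i) ?_
      rw [Complex.conj_eq_iff_im.mp h1, Complex.conj_eq_iff_im.mp h2]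
    · have hS := hEq (Sm i j) (Sm_density i j)
      rw [reTr_Sm hA'h hij, reTr_Sm hherm hij] at hS
      have hT := hEq (Tm i j) (Tm_density i j)
      rw [reTr_Tm hA'h hij, reTr_Tm hherm hij] at hT
      have hre : (A' i j).re = ((Amat h) i j).re := by
        have := hdiag i; have := hdiag j; linarith
      have him : (A' i j).im = ((Amat h) i j).im := by
        have := hdiag i; have := hdiag j; linarith
      exact Complex.ext hre him
end

section
/- Let n be a nonempty finite type. Let g : Matrix n n ℂ → ℝ be a function such that g(A) ∈ [0,1] for every effect A, g(1) = 1 (where 1 is the identity matrix), g(A + B) = g(A) + g(B) whenever A and B are effects with A + B ≤ 1 in the Löwner order, and g(r • A) = r * g(A) for every real r ∈ [0,1] and every effect A. Then there exists a unique density matrix B : Matrix n n ℂ such that g(A) = ((B * A).trace).re for every effect A. (The density matrices on H are in bijection, via B ↦ trace(B·−), with the effect-module maps from the effects to [0,1]; a Gleason-type correspondence.) -/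
open Matrix ComplexOrder


open Matrix ComplexOrder

namespace GleasonAux

set_option linter.unusedSectionVars false

variable {n : Type*} [Fintype n] [DecidableEq n]

noncomputable def TT (X : Matrix n n ℂ) : ℝ := ∑ p : n × n, ‖X p.1 p.2‖

lemma TT_nonneg (X : Matrix n n ℂ) : 0 ≤ TT X :=
  Finset.sum_nonneg fun _ _ => norm_nonneg _

lemma TT_zero : TT (0 : Matrix n n ℂ) = 0 := by
  simp [TT]

lemma TT_neg (X : Matrix n n ℂ) : TT (-X) = TT X := by
  simp [TT]

lemma TT_smul (r : ℝ) (hr : 0 ≤ r) (X : Matrix n n ℂ) : TT (r • X) = r * TT X := by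
  simp [TT, Finset.mul_sum, abs_of_nonneg hr]

lemma TT_add_le (X Y : Matrix n n ℂ) : TT (X + Y) ≤ TT X + TT Y := by
  rw [TT, TT, TT, ← Finset.sum_add_distrib]
  exact Finset.sum_le_sum fun p _ => norm_add_le _ _

noncomputable def Sx (x : n → ℂ) : ℝ := ∑ i, Complex.normSq (x i)

lemma Sx_nonneg (x : n → ℂ) : 0 ≤ Sx x :=
  Finset.sum_nonneg fun _ _ => Complex.normSq_nonneg _

lemma dot_self_eq_Sx (x : n → ℂ) : star x ⬝ᵥ x = (Sx x : ℂ) := by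
  simp [dotProduct, Sx, Complex.normSq_eq_conj_mul_self]

lemma abs_quad_le (X : Matrix n n ℂ) (x : n → ℂ) :
    ‖star x ⬝ᵥ X *ᵥ x‖ ≤ TT X * Sx x := by
  have h1 : star x ⬝ᵥ X *ᵥ x = ∑ p : n × n, (starRingEnd ℂ) (x p.1) * (X p.1 p.2 * x p.2) := by
    simp [dotProduct, mulVec, Finset.mul_sum, ← Fintype.sum_prod_type, Pi.star_apply,
      Complex.star_def, Fintype.sum_prod_type]
  rw [h1, TT, Finset.sum_mul]
  refine (norm_sum_le _ _).trans (Finset.sum_le_sum fun p _ => ?_)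
  rw [norm_mul, norm_mul, Complex.norm_conj]
  have hb : ‖x p.1‖ * ‖x p.2‖ ≤ Sx x := by
    have key : ∀ i : n, ‖x i‖ ^ 2 ≤ Sx x := fun i => by
      rw [Complex.sq_norm]
      exact Finset.single_le_sum (f := fun j => Complex.normSq (x j))
        (fun _ _ => Complex.normSq_nonneg _) (Finset.mem_univ i)
    nlinarith [key p.1, key p.2, norm_nonneg (x p.1), norm_nonneg (x p.2)]
  calc ‖x p.1‖ * (‖X p.1 p.2‖ * ‖x p.2‖)
      = ‖X p.1 p.2‖ * (‖x p.1‖ * ‖x p.2‖) := by ring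
    _ ≤ ‖X p.1 p.2‖ * Sx x :=
        mul_le_mul_of_nonneg_left hb (norm_nonneg _)

end GleasonAux

open Matrix ComplexOrder

namespace GleasonAux2

set_option linter.unusedSectionVars false

variable {n : Type*} [Fintype n] [DecidableEq n]

lemma herm_smul {A : Matrix n n ℂ} (hA : A.IsHermitian) (r : ℝ) : (r • A).IsHermitian := by
  unfold Matrix.IsHermitian at *
  rw [conjTranspose_smul, star_trivial, hA]

lemma quad_real {X : Matrix n n ℂ} (hX : X.IsHermitian) (x : n → ℂ) :
    star x ⬝ᵥ X *ᵥ x = (((star x ⬝ᵥ X *ᵥ x).re : ℝ) : ℂ) := by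
  have h : star (star x ⬝ᵥ X *ᵥ x) = star x ⬝ᵥ X *ᵥ x := by
    conv_lhs => rw [star_dotProduct, star_star, star_mulVec, hX.eq, ← dotProduct_mulVec]
  exact (Complex.conj_eq_iff_re.mp h).symm

lemma quad_smul_one_add (r : ℝ) (X : Matrix n n ℂ) (x : n → ℂ) :
    star x ⬝ᵥ (r • (1 : Matrix n n ℂ) + X) *ᵥ x
      = (r : ℂ) * (GleasonAux.Sx x : ℂ) + star x ⬝ᵥ X *ᵥ x := by
  rw [add_mulVec, dotProduct_add, smul_mulVec, one_mulVec, dotProduct_smul,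
    GleasonAux.dot_self_eq_Sx]
  simp [Complex.real_smul]

lemma posSemidef_smul_one_add {X : Matrix n n ℂ} (hX : X.IsHermitian) {r : ℝ}
    (hr : GleasonAux.TT X ≤ r) : (r • (1 : Matrix n n ℂ) + X).PosSemidef := by
  refine PosSemidef.of_dotProduct_mulVec_nonneg ((herm_smul isHermitian_one r).add hX) (fun x => ?_)
  rw [quad_smul_one_add, quad_real hX x]
  set q : ℝ := (star x ⬝ᵥ X *ᵥ x).re
  have habs : ‖star x ⬝ᵥ X *ᵥ x‖ ≤ GleasonAux.TT X * GleasonAux.Sx x :=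
    GleasonAux.abs_quad_le X x
  have hre : |q| ≤ ‖star x ⬝ᵥ X *ᵥ x‖ := Complex.abs_re_le_norm _
  have hS : 0 ≤ GleasonAux.Sx x := GleasonAux.Sx_nonneg x
  have hT : 0 ≤ GleasonAux.TT X := GleasonAux.TT_nonneg X
  have key : 0 ≤ r * GleasonAux.Sx x + q := by
    have h1 : GleasonAux.TT X * GleasonAux.Sx x ≤ r * GleasonAux.Sx x :=
      mul_le_mul_of_nonneg_right hr hS
    have h2 : -q ≤ |q| := neg_le_abs q
    linarith
  calc (0 : ℂ) ≤ ((r * GleasonAux.Sx x + q : ℝ) : ℂ) := by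
        rw [Complex.zero_le_real]; exact key
    _ = (r : ℂ) * (GleasonAux.Sx x : ℂ) + ((q : ℝ) : ℂ) := by push_cast; ring

lemma posSemidef_smul_one_sub {X : Matrix n n ℂ} (hX : X.IsHermitian) {r : ℝ}
    (hr : GleasonAux.TT X ≤ r) : (r • (1 : Matrix n n ℂ) - X).PosSemidef := by
  have h := posSemidef_smul_one_add hX.neg (X := -X) (r := r)
    (by rw [GleasonAux.TT_neg]; exact hr)
  simpa [sub_eq_add_neg] using h

lemma posSemidef_add_smul_one {X : Matrix n n ℂ} (hX : X.IsHermitian) {r : ℝ}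
    (hr : GleasonAux.TT X ≤ r) : (X + r • (1 : Matrix n n ℂ)).PosSemidef := by
  have := posSemidef_smul_one_add hX hr; rwa [add_comm] at this

lemma posSemidef_smul {A : Matrix n n ℂ} (hA : A.PosSemidef) {c : ℝ} (hc : 0 ≤ c) :
    (c • A).PosSemidef := by
  refine PosSemidef.of_dotProduct_mulVec_nonneg (herm_smul hA.1 c) (fun x => ?_)
  rw [smul_mulVec, dotProduct_smul]
  have := hA.dotProduct_mulVec_nonneg x
  rw [Complex.real_smul]
  exact mul_nonneg (by rw [Complex.zero_le_real]; exact hc) this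

lemma one_sub_smul_effect {A : Matrix n n ℂ} (hA : A.IsHermitian) {c : ℝ} (hc : 0 ≤ c)
    (h1 : c * GleasonAux.TT A ≤ 1) : (1 - c • A).PosSemidef := by
  have h := posSemidef_smul_one_sub (herm_smul hA c) (r := 1)
    (by rw [GleasonAux.TT_smul c hc A]; exact h1)
  simpa using h

end GleasonAux2
namespace GleasonAux3

open GleasonAux GleasonAux2 Matrix ComplexOrder

set_option linter.unusedSectionVars false

variable {n : Type*} [Fintype n] [DecidableEq n]

def HRange (g : Matrix n n ℂ → ℝ) : Prop :=
  ∀ A : Matrix n n ℂ, A.PosSemidef → (1 - A).PosSemidef → 0 ≤ g A ∧ g A ≤ 1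

def HAdd (g : Matrix n n ℂ → ℝ) : Prop :=
  ∀ A B : Matrix n n ℂ, A.PosSemidef → (1 - A).PosSemidef →
    B.PosSemidef → (1 - B).PosSemidef → (1 - (A + B)).PosSemidef →
    g (A + B) = g A + g B

def HSmul (g : Matrix n n ℂ → ℝ) : Prop :=
  ∀ (r : ℝ), 0 ≤ r → r ≤ 1 → ∀ A : Matrix n n ℂ,
    A.PosSemidef → (1 - A).PosSemidef → g (r • A) = r * g A

variable {g : Matrix n n ℂ → ℝ}

noncomputable def phi (g : Matrix n n ℂ → ℝ) (A : Matrix n n ℂ) : ℝ :=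
  (TT A + 1) * g ((TT A + 1)⁻¹ • A)

lemma smul_effect_aux {A : Matrix n n ℂ} (hA : A.PosSemidef) {s : ℝ} (hs : TT A ≤ s) :
    ((s + 1)⁻¹ • A).PosSemidef ∧ (1 - (s + 1)⁻¹ • A).PosSemidef := by
  have hs0 : 0 ≤ s := (TT_nonneg A).trans hs
  have hpos : (0:ℝ) < s + 1 := by linarith
  have hcnn : (0:ℝ) ≤ (s + 1)⁻¹ := by positivity
  refine ⟨posSemidef_smul hA hcnn, one_sub_smul_effect hA.1 hcnn ?_⟩
  calc (s + 1)⁻¹ * TT A ≤ (s + 1)⁻¹ * (s + 1) :=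
        mul_le_mul_of_nonneg_left (by linarith) hcnn
    _ = 1 := inv_mul_cancel₀ hpos.ne'

lemma g_zero (hadd : HAdd g) : g 0 = 0 := by
  have h1 : (1 - (0:Matrix n n ℂ)).PosSemidef := by
    rw [sub_zero]; exact PosSemidef.one
  have h2 : (1 - ((0:Matrix n n ℂ) + 0)).PosSemidef := by
    rw [add_zero, sub_zero]; exact PosSemidef.one
  have := hadd 0 0 PosSemidef.zero h1 PosSemidef.zero h1 h2
  rw [add_zero] at this
  linarith

lemma scale_le (hsmul : HSmul g) {A : Matrix n n ℂ} (hA : A.PosSemidef)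
    {c d : ℝ} (hc : 0 < c) (hcd : c ≤ d)
    (hd : (1 - d • A).PosSemidef) : g (c • A) = (c / d) * g (d • A) := by
  have hd0 : 0 < d := hc.trans_le hcd
  have h1 : c / d ≤ 1 := (div_le_one hd0).2 hcd
  have h0 : 0 ≤ c / d := by positivity
  have := hsmul (c / d) h0 h1 (d • A) (posSemidef_smul hA hd0.le) hd
  rwa [smul_smul, div_mul_cancel₀ c hd0.ne'] at this

lemma scale_indep (hsmul : HSmul g) {A : Matrix n n ℂ} (hA : A.PosSemidef)
    {c d : ℝ} (hc : 0 < c) (hd : 0 < d)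
    (hce : (1 - c • A).PosSemidef) (hde : (1 - d • A).PosSemidef) :
    d * g (c • A) = c * g (d • A) := by
  rcases le_total c d with h | h
  · rw [scale_le hsmul hA hc h hde]; field_simp
  · rw [scale_le hsmul hA hd h hce]; field_simp

lemma phi_eq (hsmul : HSmul g) {A : Matrix n n ℂ} (hA : A.PosSemidef)
    {c : ℝ} (hc : 0 < c) (hce : (1 - c • A).PosSemidef) :
    g (c • A) = c * phi g A := by
  have hT : 0 ≤ TT A := TT_nonneg A
  have hpos : (0:ℝ) < TT A + 1 := by linarith
  have heff := smul_effect_aux hA (le_refl (TT A))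
  have h := scale_indep hsmul hA hc (by positivity) hce heff.2
  rw [phi]
  have hne : (TT A + 1)⁻¹ ≠ 0 := by positivity
  field_simp at h ⊢
  linarith [h]

lemma phi_of_effect (hsmul : HSmul g) {A : Matrix n n ℂ} (hA : A.PosSemidef)
    (hA1 : (1 - A).PosSemidef) : phi g A = g A := by
  have := phi_eq hsmul hA one_pos (by rwa [one_smul])
  rw [one_smul] at this
  linarith

lemma phi_nonneg (hrange : HRange g) {A : Matrix n n ℂ} (hA : A.PosSemidef) :
    0 ≤ phi g A := by
  have hT : 0 ≤ TT A := TT_nonneg A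
  have heff := smul_effect_aux hA (le_refl (TT A))
  have := (hrange _ heff.1 heff.2).1
  have hpos : (0:ℝ) < TT A + 1 := by linarith
  exact mul_nonneg hpos.le this

lemma phi_add (hadd : HAdd g) (hsmul : HSmul g) {A B : Matrix n n ℂ}
    (hA : A.PosSemidef) (hB : B.PosSemidef) :
    phi g (A + B) = phi g A + phi g B := by
  set s : ℝ := TT A + TT B with hs
  have hTA : 0 ≤ TT A := TT_nonneg A
  have hTB : 0 ≤ TT B := TT_nonneg B
  set c : ℝ := (s + 1)⁻¹ with hc
  have hcpos : (0:ℝ) < c := by rw [hc]; positivity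
  have heA := smul_effect_aux hA (s := s) (by linarith)
  have heB := smul_effect_aux hB (s := s) (by linarith)
  have heAB := smul_effect_aux (hA.add hB) (s := s)
    ((TT_add_le A B).trans (by linarith))
  have hone_sub : (1 - (c • A + c • B)).PosSemidef := by
    rw [← smul_add]; exact heAB.2
  have h := hadd (c • A) (c • B) heA.1 heA.2 heB.1 heB.2 hone_sub
  rw [← smul_add] at h
  rw [phi_eq hsmul (hA.add hB) hcpos heAB.2, phi_eq hsmul hA hcpos heA.2,
    phi_eq hsmul hB hcpos heB.2] at h
  have := mul_left_cancel₀ hcpos.ne' (by linarith [h] : c * phi g (A + B) = c * (phi g A + phi g B))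
  linarith [this]

lemma phi_zero (hadd : HAdd g) : phi g 0 = 0 := by
  rw [phi, smul_zero, g_zero hadd, mul_zero]

lemma phi_smul (hadd : HAdd g) (hsmul : HSmul g) {A : Matrix n n ℂ}
    (hA : A.PosSemidef) {r : ℝ} (hr : 0 ≤ r) :
    phi g (r • A) = r * phi g A := by
  rcases eq_or_lt_of_le hr with h | h
  · rw [← h, zero_smul, zero_mul, phi_zero hadd]
  · have hrA : (r • A).PosSemidef := posSemidef_smul hA hr
    have hT : 0 ≤ TT (r • A) := TT_nonneg _
    set c : ℝ := (TT (r • A) + 1)⁻¹ with hc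
    have hcpos : (0:ℝ) < c := by rw [hc]; positivity
    have heff := smul_effect_aux hrA (le_refl (TT (r • A)))
    have h1 : g (c • (r • A)) = c * phi g (r • A) := phi_eq hsmul hrA hcpos heff.2
    have h2 : g ((c * r) • A) = (c * r) * phi g A := by
      refine phi_eq hsmul hA (by positivity) ?_
      rw [← smul_smul]; exact heff.2
    rw [← smul_smul] at h2
    rw [h1] at h2
    have := mul_left_cancel₀ hcpos.ne' (by linarith [h2] : c * phi g (r • A) = c * (r * phi g A))
    linarith [this]

noncomputable def psi (g : Matrix n n ℂ → ℝ) (X : Matrix n n ℂ) : ℝ :=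
  phi g (X + TT X • 1) - TT X

lemma psi_eq (hone : g 1 = 1) (hadd : HAdd g) (hsmul : HSmul g)
    {X : Matrix n n ℂ} (hX : X.IsHermitian) {t : ℝ} (ht : TT X ≤ t) :
    psi g X = phi g (X + t • 1) - t := by
  have key : X + t • 1 = (X + TT X • 1) + (t - TT X) • (1 : Matrix n n ℂ) := by
    rw [sub_smul]; abel
  have hP : (X + TT X • (1:Matrix n n ℂ)).PosSemidef :=
    posSemidef_add_smul_one hX (le_refl _)
  have hQ : ((t - TT X) • (1:Matrix n n ℂ)).PosSemidef :=
    posSemidef_smul PosSemidef.one (by linarith)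
  have h1 : phi g ((t - TT X) • (1:Matrix n n ℂ)) = t - TT X := by
    rw [phi_smul hadd hsmul PosSemidef.one (by linarith),
      phi_of_effect hsmul PosSemidef.one (by rw [sub_self]; exact PosSemidef.zero), hone, mul_one]
  rw [psi, key, phi_add hadd hsmul hP hQ, h1]
  ring

lemma psi_add (hone : g 1 = 1) (hadd : HAdd g) (hsmul : HSmul g)
    {X Y : Matrix n n ℂ} (hX : X.IsHermitian) (hY : Y.IsHermitian) :
    psi g (X + Y) = psi g X + psi g Y := by
  rw [psi_eq hone hadd hsmul (hX.add hY) (t := TT X + TT Y) (TT_add_le X Y)]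
  have key : X + Y + (TT X + TT Y) • (1:Matrix n n ℂ)
      = (X + TT X • 1) + (Y + TT Y • 1) := by
    rw [add_smul]; abel
  rw [key, phi_add hadd hsmul (posSemidef_add_smul_one hX (le_refl _))
    (posSemidef_add_smul_one hY (le_refl _)), psi, psi]
  ring

lemma psi_smul_nonneg (hadd : HAdd g) (hsmul : HSmul g)
    {X : Matrix n n ℂ} (hX : X.IsHermitian) {r : ℝ} (hr : 0 ≤ r) :
    psi g (r • X) = r * psi g X := by
  rw [psi, psi, TT_smul r hr, ← smul_smul, ← smul_add,
    phi_smul hadd hsmul (posSemidef_add_smul_one hX (le_refl _)) hr]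
  ring

lemma psi_zero (hadd : HAdd g) : psi g 0 = 0 := by
  rw [psi, TT_zero, zero_smul, add_zero, phi_zero hadd, sub_zero]

lemma psi_neg (hone : g 1 = 1) (hadd : HAdd g) (hsmul : HSmul g)
    {X : Matrix n n ℂ} (hX : X.IsHermitian) : psi g (-X) = -psi g X := by
  have h := psi_add hone hadd hsmul hX hX.neg
  rw [add_neg_cancel, psi_zero hadd] at h
  linarith

lemma psi_smul (hone : g 1 = 1) (hadd : HAdd g) (hsmul : HSmul g)
    {X : Matrix n n ℂ} (hX : X.IsHermitian) (r : ℝ) :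
    psi g (r • X) = r * psi g X := by
  rcases le_total 0 r with h | h
  · exact psi_smul_nonneg hadd hsmul hX h
  · have : r • X = -(((-r) : ℝ) • X) := by rw [neg_smul, neg_neg]
    rw [this, psi_neg hone hadd hsmul (herm_smul hX (-r)),
      psi_smul_nonneg hadd hsmul hX (by linarith)]
    ring

lemma psi_of_psd (hone : g 1 = 1) (hadd : HAdd g) (hsmul : HSmul g)
    {P : Matrix n n ℂ} (hP : P.PosSemidef) : psi g P = phi g P := by
  have h1 : phi g (TT P • (1:Matrix n n ℂ)) = TT P := by
    rw [phi_smul hadd hsmul PosSemidef.one (TT_nonneg P),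
      phi_of_effect hsmul PosSemidef.one (by rw [sub_self]; exact PosSemidef.zero), hone, mul_one]
  rw [psi, phi_add hadd hsmul hP (posSemidef_smul PosSemidef.one (TT_nonneg P)), h1]
  ring

lemma psi_nonneg_of_psd (hone : g 1 = 1) (hrange : HRange g) (hadd : HAdd g) (hsmul : HSmul g)
    {P : Matrix n n ℂ} (hP : P.PosSemidef) : 0 ≤ psi g P := by
  rw [psi_of_psd hone hadd hsmul hP]; exact phi_nonneg hrange hP

lemma psi_of_effect (hone : g 1 = 1) (hadd : HAdd g) (hsmul : HSmul g)
    {A : Matrix n n ℂ} (hA : A.PosSemidef) (hA1 : (1 - A).PosSemidef) :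
    psi g A = g A := by
  rw [psi_of_psd hone hadd hsmul hA, phi_of_effect hsmul hA hA1]

end GleasonAux3
namespace GleasonAux4

open GleasonAux GleasonAux2 GleasonAux3 Matrix ComplexOrder

set_option linter.unusedSectionVars false

variable {n : Type*} [Fintype n] [DecidableEq n]

noncomputable def HH (M : Matrix n n ℂ) : Matrix n n ℂ := (2:ℝ)⁻¹ • (M + Mᴴ)

noncomputable def KK (M : Matrix n n ℂ) : Matrix n n ℂ :=
  (2:ℝ)⁻¹ • (Complex.I • (Mᴴ - M))

lemma HH_herm (M : Matrix n n ℂ) : (HH M).IsHermitian :=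
  herm_smul (isHermitian_add_transpose_self M) _

lemma KK_herm (M : Matrix n n ℂ) : (KK M).IsHermitian := by
  refine herm_smul ?_ _
  unfold Matrix.IsHermitian
  rw [conjTranspose_smul, conjTranspose_sub, conjTranspose_conjTranspose,
    Complex.star_def, Complex.conj_I, neg_smul, ← smul_neg, neg_sub]

lemma HH_add (M N : Matrix n n ℂ) : HH (M + N) = HH M + HH N := by
  rw [HH, HH, HH, ← smul_add, conjTranspose_add]
  congr 1
  abel

lemma KK_add (M N : Matrix n n ℂ) : KK (M + N) = KK M + KK N := by
  rw [KK, KK, KK, ← smul_add, ← smul_add, conjTranspose_add]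
  congr 2
  abel

lemma HH_real_smul (r : ℝ) (M : Matrix n n ℂ) : HH (r • M) = r • HH M := by
  rw [HH, HH, conjTranspose_smul, star_trivial, ← smul_add, smul_comm]

lemma KK_real_smul (r : ℝ) (M : Matrix n n ℂ) : KK (r • M) = r • KK M := by
  rw [KK, KK, conjTranspose_smul, star_trivial, ← smul_sub, smul_comm Complex.I r,
    smul_comm ((2:ℝ)⁻¹) r]

lemma HH_I (M : Matrix n n ℂ) : HH (Complex.I • M) = -(KK M) := by
  rw [HH, KK, conjTranspose_smul, Complex.star_def, Complex.conj_I, neg_smul,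
    ← sub_eq_add_neg, ← smul_sub, ← neg_sub Mᴴ M, smul_neg, smul_neg]

lemma KK_I (M : Matrix n n ℂ) : KK (Complex.I • M) = HH M := by
  rw [KK, HH, conjTranspose_smul, Complex.star_def, Complex.conj_I, smul_sub,
    smul_smul, smul_smul, mul_neg, Complex.I_mul_I, neg_neg, one_smul,
    neg_one_smul, sub_neg_eq_add, add_comm Mᴴ M]

lemma HH_of_herm {M : Matrix n n ℂ} (hM : M.IsHermitian) : HH M = M := by
  rw [HH, hM.eq, ← two_smul ℝ M, smul_smul]
  norm_num

lemma KK_of_herm {M : Matrix n n ℂ} (hM : M.IsHermitian) : KK M = 0 := by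
  rw [KK, hM.eq, sub_self, smul_zero, smul_zero]

lemma HH_conjT (M : Matrix n n ℂ) : HH Mᴴ = HH M := by
  rw [HH, HH, conjTranspose_conjTranspose, add_comm]

lemma KK_conjT (M : Matrix n n ℂ) : KK Mᴴ = -KK M := by
  rw [KK, KK, conjTranspose_conjTranspose, ← neg_sub, smul_neg, smul_neg]

noncomputable def Lc (g : Matrix n n ℂ → ℝ) (M : Matrix n n ℂ) : ℂ :=
  (psi g (HH M) : ℂ) + Complex.I * (psi g (KK M) : ℂ)

variable {g : Matrix n n ℂ → ℝ}

lemma Lc_add (hone : g 1 = 1) (hadd : HAdd g) (hsmul : HSmul g) (M N : Matrix n n ℂ) :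
    Lc g (M + N) = Lc g M + Lc g N := by
  rw [Lc, Lc, Lc, HH_add, KK_add, psi_add hone hadd hsmul (HH_herm M) (HH_herm N),
    psi_add hone hadd hsmul (KK_herm M) (KK_herm N)]
  push_cast
  ring

lemma Lc_real_smul (hone : g 1 = 1) (hadd : HAdd g) (hsmul : HSmul g) (r : ℝ)
    (M : Matrix n n ℂ) : Lc g (r • M) = (r : ℂ) * Lc g M := by
  rw [Lc, Lc, HH_real_smul, KK_real_smul, psi_smul hone hadd hsmul (HH_herm M) r,
    psi_smul hone hadd hsmul (KK_herm M) r]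
  push_cast
  ring

lemma Lc_I_smul (hone : g 1 = 1) (hadd : HAdd g) (hsmul : HSmul g)
    (M : Matrix n n ℂ) : Lc g (Complex.I • M) = Complex.I * Lc g M := by
  rw [Lc, Lc, HH_I, KK_I, ← neg_one_smul ℝ (KK M),
    psi_smul hone hadd hsmul (KK_herm M) (-1)]
  push_cast
  linear_combination (-(psi g (KK M) : ℂ)) * Complex.I_sq

lemma smul_decomp (z : ℂ) (M : Matrix n n ℂ) :
    z • M = z.re • M + z.im • (Complex.I • M) := by
  ext i j
  simp only [Matrix.add_apply, Matrix.smul_apply, Complex.real_smul, smul_eq_mul]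
  linear_combination (M i j) * (Complex.re_add_im z).symm

lemma Lc_smul (hone : g 1 = 1) (hadd : HAdd g) (hsmul : HSmul g) (z : ℂ)
    (M : Matrix n n ℂ) : Lc g (z • M) = z * Lc g M := by
  rw [smul_decomp z M, Lc_add hone hadd hsmul, Lc_real_smul hone hadd hsmul,
    Lc_real_smul hone hadd hsmul, Lc_I_smul hone hadd hsmul]
  conv_rhs => rw [← Complex.re_add_im z]
  ring

lemma Lc_conjT (hone : g 1 = 1) (hadd : HAdd g) (hsmul : HSmul g)
    (M : Matrix n n ℂ) : Lc g Mᴴ = (starRingEnd ℂ) (Lc g M) := by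
  rw [Lc, Lc, HH_conjT, KK_conjT, ← neg_one_smul ℝ (KK M),
    psi_smul hone hadd hsmul (KK_herm M) (-1)]
  rw [_root_.map_add, _root_.map_mul, Complex.conj_I, Complex.conj_ofReal, Complex.conj_ofReal]
  push_cast
  ring

lemma Lc_of_herm (hone : g 1 = 1) (hadd : HAdd g) (hsmul : HSmul g)
    {M : Matrix n n ℂ} (hM : M.IsHermitian) : Lc g M = (psi g M : ℂ) := by
  rw [Lc, HH_of_herm hM, KK_of_herm hM, psi_zero hadd]
  push_cast
  ring

lemma dot_eq_trace (Q : Matrix n n ℂ) (x : n → ℂ) :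
    star x ⬝ᵥ Q *ᵥ x
      = trace (Q * Matrix.of fun a b => x a * (starRingEnd ℂ) (x b)) := by
  simp only [dotProduct, mulVec, trace, diag, mul_apply, Matrix.of_apply, Pi.star_apply,
    Complex.star_def, Finset.mul_sum]
  refine Finset.sum_congr rfl fun i _ => Finset.sum_congr rfl fun j _ => by ring

lemma R_posSemidef (x : n → ℂ) :
    (Matrix.of fun a b => x a * (starRingEnd ℂ) (x b)).PosSemidef := by
  refine PosSemidef.of_dotProduct_mulVec_nonneg ?_ (fun y => ?_)
  · ext i j
    simp only [conjTranspose_apply, Matrix.of_apply, star_mul', Complex.star_def,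
      Complex.conj_conj]
    ring
  · have key : star y ⬝ᵥ (Matrix.of fun a b => x a * (starRingEnd ℂ) (x b)) *ᵥ y
        = (starRingEnd ℂ) (star x ⬝ᵥ y) * (star x ⬝ᵥ y) := by
      simp only [dotProduct, mulVec, Matrix.of_apply, Pi.star_apply, Complex.star_def,
        map_sum, _root_.map_mul, Complex.conj_conj, Finset.mul_sum, Finset.sum_mul]
      rw [Finset.sum_comm]
      refine Finset.sum_congr rfl fun i _ => Finset.sum_congr rfl fun j _ => by ring
    rw [key, ← Complex.normSq_eq_conj_mul_self, Complex.zero_le_real]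
    exact Complex.normSq_nonneg _

end GleasonAux4

open GleasonAux GleasonAux2 GleasonAux3 GleasonAux4

theorem densities_are_effect_module_maps_on_effects {n : Type*}
    [Fintype n] [DecidableEq n] [Nonempty n]
    (g : Matrix n n ℂ → ℝ)
    (hrange : ∀ A : Matrix n n ℂ, A.PosSemidef → (1 - A).PosSemidef → 0 ≤ g A ∧ g A ≤ 1)
    (hone : g 1 = 1)
    (hadd : ∀ A B : Matrix n n ℂ, A.PosSemidef → (1 - A).PosSemidef →
      B.PosSemidef → (1 - B).PosSemidef → (1 - (A + B)).PosSemidef →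
      g (A + B) = g A + g B)
    (hsmul : ∀ (r : ℝ), 0 ≤ r → r ≤ 1 → ∀ A : Matrix n n ℂ,
      A.PosSemidef → (1 - A).PosSemidef → g (r • A) = r * g A) :
    ∃! B : Matrix n n ℂ, B.PosSemidef ∧ B.trace = 1 ∧
      ∀ A : Matrix n n ℂ, A.PosSemidef → (1 - A).PosSemidef →
        g A = ((B * A).trace).re := by
  classical
  have hA' : HAdd g := hadd
  have hS' : HSmul g := hsmul
  have hR' : HRange g := hrange
  set C : Matrix n n ℂ := Matrix.of fun i j => Lc g (single j i 1) with hC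
  let L : Matrix n n ℂ →ₗ[ℂ] ℂ :=
    { toFun := Lc g
      map_add' := Lc_add hone hA' hS'
      map_smul' := fun z M => by
        simpa [smul_eq_mul] using Lc_smul hone hA' hS' z M }
  have hLapp : ∀ M, L M = Lc g M := fun _ => rfl
  have repr : ∀ M : Matrix n n ℂ, Lc g M = (C * M).trace := by
    intro M
    rw [← hLapp M]
    conv_lhs => rw [Matrix.matrix_eq_sum_single M]
    rw [map_sum]
    simp only [map_sum]
    have h2 : ∀ i j : n, (Matrix.single i j (M i j) : Matrix n n ℂ)
        = (M i j) • Matrix.single i j 1 := by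
      intro i j; rw [Matrix.smul_single, smul_eq_mul, mul_one]
    simp only [h2, _root_.map_smul, smul_eq_mul]
    have h3 : (C * M).trace = ∑ j : n, ∑ i : n, C j i * M i j := by
      simp [Matrix.trace, Matrix.diag, Matrix.mul_apply]
    rw [h3, Finset.sum_comm]
    refine Finset.sum_congr rfl fun i _ => Finset.sum_congr rfl fun j _ => ?_
    rw [hLapp, hC]
    simp only [Matrix.of_apply]
    ring
  have hstd : ∀ i j : n, (Matrix.single i j (1:ℂ))ᴴ = Matrix.single j i 1 := by
    intro i j
    ext a b
    simp only [Matrix.conjTranspose_apply, Matrix.single, Matrix.of_apply]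
    rw [apply_ite star, star_one, star_zero]
    exact if_congr and_comm rfl rfl
  have hC_herm : C.IsHermitian := by
    ext i j
    rw [Matrix.conjTranspose_apply, hC]
    simp only [Matrix.of_apply]
    rw [Complex.star_def, ← Lc_conjT hone hA' hS', hstd]
  have hC_psd : C.PosSemidef := by
    refine PosSemidef.of_dotProduct_mulVec_nonneg hC_herm (fun x => ?_)
    rw [dot_eq_trace C x, ← repr,
      Lc_of_herm hone hA' hS' (R_posSemidef x).1, Complex.zero_le_real]
    exact psi_nonneg_of_psd hone hR' hA' hS' (R_posSemidef x)
  have h1eff : (1 - (1 : Matrix n n ℂ)).PosSemidef := by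
    rw [sub_self]; exact Matrix.PosSemidef.zero
  have hC_tr : C.trace = 1 := by
    have := repr 1
    rw [Matrix.mul_one] at this
    rw [← this, Lc_of_herm hone hA' hS' Matrix.isHermitian_one,
      psi_of_effect hone hA' hS' Matrix.PosSemidef.one h1eff, hone, Complex.ofReal_one]
  have hC_eff : ∀ A : Matrix n n ℂ, A.PosSemidef → (1 - A).PosSemidef →
      g A = ((C * A).trace).re := by
    intro A hA hA1
    rw [← repr, Lc_of_herm hone hA' hS' hA.1, Complex.ofReal_re,
      psi_of_effect hone hA' hS' hA hA1]
  refine ⟨C, ⟨hC_psd, hC_tr, hC_eff⟩, ?_⟩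
  rintro B' ⟨hpsd', htr', heq'⟩
  have hDherm : (B' - C).IsHermitian := hpsd'.1.sub hC_herm
  have key : ∀ P : Matrix n n ℂ, P.PosSemidef → ((B' - C) * P).trace.re = 0 := by
    intro P hP
    have hTP : 0 ≤ TT P := TT_nonneg P
    set c : ℝ := (TT P + 1)⁻¹ with hc
    have hcpos : 0 < c := by rw [hc]; positivity
    obtain ⟨he1, he2⟩ := smul_effect_aux hP (le_refl (TT P))
    have h1 := heq' _ he1 he2
    have h2 := hC_eff _ he1 he2
    have h3 : ((B' - C) * (c • P)).trace.re = 0 := by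
      rw [Matrix.sub_mul, Matrix.trace_sub, Complex.sub_re]
      rw [← h1, ← h2]
      ring
    rw [Matrix.mul_smul, Matrix.trace_smul, Complex.real_smul,
      Complex.re_ofReal_mul] at h3
    exact (mul_eq_zero.mp h3).resolve_left hcpos.ne'
  have hDtr : (B' - C).trace = 0 := by
    rw [Matrix.trace_sub, htr', hC_tr, sub_self]
  have hq : ((B' - C) * (B' - C)).trace.re = 0 := by
    have hP : ((B' - C) + TT (B' - C) • 1).PosSemidef :=
      posSemidef_add_smul_one hDherm (le_refl _)
    have hk := key _ hP
    rw [Matrix.mul_add, Matrix.trace_add, Matrix.mul_smul, Matrix.mul_one,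
      Matrix.trace_smul, hDtr, smul_zero, add_zero] at hk
    exact hk
  have hform : ((B' - C) * (B' - C)).trace
      = ((∑ p : n × n, Complex.normSq ((B' - C) p.1 p.2) : ℝ) : ℂ) := by
    have hsym : ∀ i j : n, (B' - C) j i = star ((B' - C) i j) := by
      intro i j
      conv_lhs => rw [← hDherm.eq]
      rw [Matrix.conjTranspose_apply]
    simp only [Matrix.trace, Matrix.diag, Matrix.mul_apply]
    push_cast
    rw [Fintype.sum_prod_type]
    refine Finset.sum_congr rfl fun i _ => Finset.sum_congr rfl fun j _ => ?_
    rw [hsym i j, Complex.star_def, Complex.mul_conj]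
  have hsum : ∑ p : n × n, Complex.normSq ((B' - C) p.1 p.2) = 0 := by
    have := hq
    rw [hform, Complex.ofReal_re] at this
    exact this
  have hzero : B' - C = 0 := by
    ext i j
    have hp := (Finset.sum_eq_zero_iff_of_nonneg
      (fun p _ => Complex.normSq_nonneg ((B' - C) p.1 p.2))).mp hsum
      ⟨i, j⟩ (Finset.mem_univ _)
    simpa [Complex.normSq_eq_zero] using hp
  exact sub_eq_zero.mp hzero
end
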